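/- arXiv:2006.15071 — 7 statements merged into one kernel-verified Lean document; each statement's English description precedes it below -/
import Mathlib

section
/- The curve Γ reconstructed from a prescribed signed curvature has the prescribed curvature: for every continuous γ : ℝ → ℝ, the curve Γ defined by the reconstruction formula is twice continuously differentiable, is parametrized by arc length (|Γ̇(s)| = 1 for all s ∈ ℝ), and its signed curvature equals the prescribed function, i.e. (Γ̇₂Γ̈₁ − Γ̇₁Γ̈₂)(s) = γ(s) for all s ∈ ℝ. -/
open MeasureTheory intervalIntegral

/-- `β(s₂,s₁) = ∫_{s₁}^{s₂} γ(ξ) dξ`. -/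
noncomputable def curvInt (γ : ℝ → ℝ) (s₂ s₁ : ℝ) : ℝ := ∫ ξ in s₁..s₂, γ ξ

/-- First component of the curve reconstructed from the signed curvature `γ`. -/
noncomputable def curveX (γ : ℝ → ℝ) (s : ℝ) : ℝ :=
  ∫ ξ in (0:ℝ)..s, Real.cos (curvInt γ ξ 0)

/-- Second component of the curve reconstructed from the signed curvature `γ`. -/
noncomputable def curveY (γ : ℝ → ℝ) (s : ℝ) : ℝ :=
  -∫ ξ in (0:ℝ)..s, Real.sin (curvInt γ ξ 0)

lemma ftc_cont {f : ℝ → ℝ} (hf : Continuous f) (s : ℝ) :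
    HasDerivAt (fun u => ∫ x in (0:ℝ)..u, f x) (f s) s :=
  intervalIntegral.integral_hasDerivAt_right (hf.intervalIntegrable _ _)
    (hf.stronglyMeasurableAtFilter _ _) hf.continuousAt

/-- the curve reconstructed from a prescribed continuous signed curvature `γ`
is `C²`, parametrized by arc length, and its signed curvature
`Γ̇₂Γ̈₁ − Γ̇₁Γ̈₂` equals `γ`. -/
theorem reconstructed_curve_has_prescribed_curvature (γ : ℝ → ℝ) (hγ : Continuous γ) :
    ContDiff ℝ 2 (curveX γ) ∧ ContDiff ℝ 2 (curveY γ) ∧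
    (∀ s : ℝ, Real.sqrt ((deriv (curveX γ) s) ^ 2 + (deriv (curveY γ) s) ^ 2) = 1) ∧
    (∀ s : ℝ, deriv (curveY γ) s * deriv (deriv (curveX γ)) s
        - deriv (curveX γ) s * deriv (deriv (curveY γ)) s = γ s) := by
  have hβ : ∀ s, HasDerivAt (fun u => curvInt γ u 0) (γ s) s := fun s => ftc_cont hγ s
  have hβc : Continuous (fun u => curvInt γ u 0) :=
    continuous_iff_continuousAt.mpr fun s => (hβ s).continuousAt
  have hcos : Continuous fun u => Real.cos (curvInt γ u 0) := Real.continuous_cos.comp hβc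
  have hsin : Continuous fun u => Real.sin (curvInt γ u 0) := Real.continuous_sin.comp hβc
  -- first derivatives
  have hX : ∀ s, HasDerivAt (curveX γ) (Real.cos (curvInt γ s 0)) s := fun s => ftc_cont hcos s
  have hY : ∀ s, HasDerivAt (curveY γ) (-Real.sin (curvInt γ s 0)) s := by
    intro s
    have := (ftc_cont hsin s).neg
    exact this
  have hdX : deriv (curveX γ) = fun s => Real.cos (curvInt γ s 0) :=
    funext fun s => (hX s).deriv
  have hdY : deriv (curveY γ) = fun s => -Real.sin (curvInt γ s 0) :=
    funext fun s => (hY s).deriv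
  -- second derivatives
  have hX2 : ∀ s, HasDerivAt (fun u => Real.cos (curvInt γ u 0))
      (-Real.sin (curvInt γ s 0) * γ s) s := fun s => (hβ s).cos
  have hY2 : ∀ s, HasDerivAt (fun u => -Real.sin (curvInt γ u 0))
      (-(Real.cos (curvInt γ s 0) * γ s)) s := fun s => (hβ s).sin.neg
  -- C¹ of derivatives
  have hβC1 : ContDiff ℝ 1 (fun u => curvInt γ u 0) := by
    rw [contDiff_one_iff_deriv]
    refine ⟨fun s => (hβ s).differentiableAt, ?_⟩
    have : deriv (fun u => curvInt γ u 0) = γ := funext fun s => (hβ s).deriv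
    rw [this]; exact hγ
  have hcosC1 : ContDiff ℝ 1 (fun u => Real.cos (curvInt γ u 0)) :=
    (Real.contDiff_cos.of_le le_top).comp hβC1
  have hsinC1 : ContDiff ℝ 1 (fun u => -Real.sin (curvInt γ u 0)) :=
    ((Real.contDiff_sin.of_le le_top).comp hβC1).neg
  have hXC2 : ContDiff ℝ 2 (curveX γ) := by
    have : ContDiff ℝ ((1 : ℕ) + 1) (curveX γ) := contDiff_succ_iff_deriv.mpr
      ⟨fun s => (hX s).differentiableAt, fun h => by simp at h, by rw [hdX]; exact_mod_cast hcosC1⟩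
    exact_mod_cast this
  have hYC2 : ContDiff ℝ 2 (curveY γ) := by
    have : ContDiff ℝ ((1 : ℕ) + 1) (curveY γ) := contDiff_succ_iff_deriv.mpr
      ⟨fun s => (hY s).differentiableAt, fun h => by simp at h, by rw [hdY]; exact_mod_cast hsinC1⟩
    exact_mod_cast this
  refine ⟨hXC2, hYC2, ?_, ?_⟩
  · intro s
    rw [hdX, hdY]
    show Real.sqrt (Real.cos (curvInt γ s 0) ^ 2 + (-Real.sin (curvInt γ s 0)) ^ 2) = 1
    rw [neg_sq, Real.cos_sq_add_sin_sq, Real.sqrt_one]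
  · intro s
    rw [hdX, hdY, (hX2 s).deriv, (hY2 s).deriv]
    have h1 := Real.sin_sq_add_cos_sq (curvInt γ s 0)
    show -Real.sin (curvInt γ s 0) * (-Real.sin (curvInt γ s 0) * γ s)
        - Real.cos (curvInt γ s 0) * -(Real.cos (curvInt γ s 0) * γ s) = γ s
    linear_combination γ s * h1
end

section
/- Chord-length formula: for every continuous γ : ℝ → ℝ and all s, s' ∈ ℝ, the squared chord length of the reconstructed curve satisfies |Γ(s) − Γ(s')|² = ∫_{s'}^{s} ∫_{s'}^{s} cos β(ξ,ξ') dξ dξ'. -/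
/-!
Writing `θ ξ = β(ξ, 0)`, additivity of the integral gives `β(ξ, ξ') = θ ξ - θ ξ'`, and the
chord `Γ(s) - Γ(s')` is `(C, -S)` with `C = ∫_{s'}^{s} cos θ`, `S = ∫_{s'}^{s} sin θ`.
Expanding `cos (θ ξ - θ ξ') = cos θ ξ cos θ ξ' + sin θ ξ sin θ ξ'` splits the double integral
into `C² + S²`.
-/

open MeasureTheory intervalIntegral

open Real

theorem intervalIntegral_mul_intervalIntegral (f g : ℝ → ℝ) (a b : ℝ) :
    (∫ x in a..b, f x) * (∫ y in a..b, g y) = ∫ x in a..b, ∫ y in a..b, f x * g y := by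
  simp only [intervalIntegral.integral_const_mul, intervalIntegral.integral_mul_const]

theorem sq_integral_cos_add_sq_integral_sin {θ : ℝ → ℝ} (hθ : Continuous θ) (a b : ℝ) :
    (∫ x in a..b, cos (θ x)) ^ 2 + (∫ x in a..b, sin (θ x)) ^ 2 =
      ∫ x in a..b, ∫ y in a..b, cos (θ x - θ y) := by
  have hcos : Continuous fun x => cos (θ x) := continuous_cos.comp hθ
  have hsin : Continuous fun x => sin (θ x) := continuous_sin.comp hθ
  simp_rw [cos_sub, sq, intervalIntegral_mul_intervalIntegral]
  rw [← intervalIntegral.integral_add]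
  · refine intervalIntegral.integral_congr fun x _ => (intervalIntegral.integral_add ?_ ?_).symm
    exacts [(continuous_const.mul hcos).intervalIntegrable a b,
      (continuous_const.mul hsin).intervalIntegrable a b]
  · simp only [intervalIntegral.integral_const_mul]
    exact (hcos.mul continuous_const).intervalIntegrable a b
  · simp only [intervalIntegral.integral_const_mul]
    exact (hsin.mul continuous_const).intervalIntegrable a b

section Curve

variable {γ : ℝ → ℝ} (hγ : ∀ a b, IntervalIntegrable γ volume a b)
include hγ

theorem continuous_curvInt_left (s₁ : ℝ) : Continuous fun s₂ => curvInt γ s₂ s₁ :=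
  continuous_primitive hγ s₁

theorem curvInt_eq_sub (s₂ s₁ s₀ : ℝ) :
    curvInt γ s₂ s₁ = curvInt γ s₂ s₀ - curvInt γ s₁ s₀ :=
  (intervalIntegral.integral_interval_sub_left (hγ s₀ s₂) (hγ s₀ s₁)).symm

theorem curveX_sub (s s' : ℝ) :
    curveX γ s - curveX γ s' = ∫ ξ in s'..s, cos (curvInt γ ξ 0) :=
  have h : Continuous fun ξ => cos (curvInt γ ξ 0) :=
    continuous_cos.comp (continuous_curvInt_left hγ 0)
  intervalIntegral.integral_interval_sub_left (h.intervalIntegrable 0 s)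
    (h.intervalIntegrable 0 s')

theorem curveY_sub (s s' : ℝ) :
    curveY γ s - curveY γ s' = -∫ ξ in s'..s, sin (curvInt γ ξ 0) := by
  have h : Continuous fun ξ => sin (curvInt γ ξ 0) :=
    continuous_sin.comp (continuous_curvInt_left hγ 0)
  rw [curveY, curveY, ← intervalIntegral.integral_interval_sub_left (h.intervalIntegrable 0 s)
    (h.intervalIntegrable 0 s')]
  ring

end Curve

/-- the squared chord length of the reconstructed curve is the double
integral of `cos β(ξ,ξ')`:
`|Γ(s) − Γ(s')|² = ∫_{s'}^{s} ∫_{s'}^{s} cos β(ξ,ξ') dξ dξ'`. -/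
theorem chord_length_sq (γ : ℝ → ℝ) (hγ : Continuous γ) (s s' : ℝ) :
    (curveX γ s - curveX γ s') ^ 2 + (curveY γ s - curveY γ s') ^ 2 =
      ∫ ξ in s'..s, (∫ ξ' in s'..s, Real.cos (curvInt γ ξ ξ')) := by
  have hγ' : ∀ a b, IntervalIntegrable γ volume a b := hγ.intervalIntegrable
  rw [curveX_sub hγ', curveY_sub hγ', neg_sq,
    sq_integral_cos_add_sq_integral_sin (continuous_curvInt_left hγ' 0)]
  simp only [← curvInt_eq_sub hγ']
end

section
/- Chord inequality and its strict version for non-straight curves: for every continuous γ : ℝ → ℝ, the reconstructed curve Γ satisfies |Γ(s) − Γ(s')| ≤ |s − s'| for all s, s' ∈ ℝ; moreover, if γ(s₀) ≠ 0 for some s₀ ∈ ℝ, then there exists a nonempty open set U ⊆ ℝ² such that |Γ(s) − Γ(s')| < |s − s'| holds for every (s,s') ∈ U. -/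
open MeasureTheory intervalIntegral

/-!
Identify `ℝ²` with `ℂ`. Then `Γ(s) = ∫₀^s T` with unit tangent `T = exp (-iβ(·,0))`, so a
chord `Γ(b) - Γ(a) = ∫_a^b T` is at most `|b - a|` long. If the chord has length exactly
`b - a`, projecting onto its direction shows that `T` is constant on `[a, b]`. Since
`T' = -iγT`, the tangent is locally injective near a point `s₀` with `γ(s₀) ≠ 0`, which gives a
pair with a strictly shorter chord; the strict inequality persists on a neighbourhood of it.
-/

open Complex Filter Topology
open scoped InnerProductSpace

section InnerProductSpace

variable {E : Type*} [NormedAddCommGroup E] [InnerProductSpace ℝ E]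

theorem eq_of_norm_le_one_of_inner_eq_one {u w : E} (hu : ‖u‖ = 1) (hw : ‖w‖ ≤ 1)
    (h : ⟪u, w⟫_ℝ = 1) : w = u := by
  have hw1 : ‖w‖ = 1 :=
    le_antisymm hw (by simpa [hu, h] using real_inner_le_norm u w)
  exact ((inner_eq_one_iff_of_norm_eq_one hu hw1).1 h).symm

theorem norm_intervalIntegral_lt_of_ne [CompleteSpace E] {f : ℝ → E} {a b : ℝ} (hab : a < b)
    (hf : ContinuousOn f (Set.Icc a b)) (hf1 : ∀ x ∈ Set.Icc a b, ‖f x‖ ≤ 1) (hne : f a ≠ f b) :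
    ‖∫ x in a..b, f x‖ < b - a := by
  set v := ∫ x in a..b, f x
  rcases eq_or_ne v 0 with hv | hv
  · rw [hv, norm_zero]
    linarith
  set u := ‖v‖⁻¹ • v
  have hu : ‖u‖ = 1 := norm_smul_inv_norm hv
  have hle : ∀ x ∈ Set.Icc a b, ⟪u, f x⟫_ℝ ≤ 1 := fun x hx =>
    (real_inner_le_norm u (f x)).trans (by rw [hu, one_mul]; exact hf1 x hx)
  have heq : ∀ x ∈ Set.Icc a b, 1 ≤ ⟪u, f x⟫_ℝ → f x = u := fun x hx h =>
    eq_of_norm_le_one_of_inner_eq_one hu (hf1 x hx) (le_antisymm (hle x hx) h)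
  have hlt : ∃ c ∈ Set.Icc a b, ⟪u, f c⟫_ℝ < 1 := by
    by_contra! h
    have ha := Set.left_mem_Icc.2 hab.le
    have hb := Set.right_mem_Icc.2 hab.le
    exact hne ((heq a ha (h a ha)).trans (heq b hb (h b hb)).symm)
  calc ‖v‖ = ⟪u, v⟫_ℝ := by
        rw [real_inner_smul_left, real_inner_self_eq_norm_sq]
        field_simp
    _ = ∫ x in a..b, ⟪u, f x⟫_ℝ :=
        ((innerSL ℝ u).intervalIntegral_comp_comm (hf.intervalIntegrable_of_Icc hab.le)).symm
    _ < ∫ _ in a..b, (1 : ℝ) :=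
        integral_lt_integral_of_continuousOn_of_le_of_exists_lt hab (continuousOn_const.inner hf)
          continuousOn_const (fun x hx => hle x (Set.Ioc_subset_Icc_self hx)) hlt
    _ = b - a := by simp

end InnerProductSpace

section Curve

noncomputable def curve (γ : ℝ → ℝ) (s : ℝ) : ℂ := curveX γ s + curveY γ s * I

noncomputable def unitTangent (γ : ℝ → ℝ) (s : ℝ) : ℂ := exp (↑(-curvInt γ s 0) * I)

variable {γ : ℝ → ℝ}

theorem sqrt_chord_eq_norm_curve_sub (γ : ℝ → ℝ) (s s' : ℝ) :
    Real.sqrt ((curveX γ s - curveX γ s') ^ 2 + (curveY γ s - curveY γ s') ^ 2)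
      = ‖curve γ s - curve γ s'‖ := by
  rw [Complex.norm_def, normSq_apply]
  simp [curve, sq]

theorem norm_unitTangent (γ : ℝ → ℝ) (s : ℝ) : ‖unitTangent γ s‖ = 1 :=
  norm_exp_ofReal_mul_I _

theorem unitTangent_eq (γ : ℝ → ℝ) (s : ℝ) :
    unitTangent γ s = Real.cos (curvInt γ s 0) - Real.sin (curvInt γ s 0) * I := by
  rw [unitTangent, exp_mul_I]
  push_cast
  rw [cos_neg, sin_neg]
  ring

theorem hasDerivAt_unitTangent (hγ : Continuous γ) (s : ℝ) :
    HasDerivAt (unitTangent γ) (-γ s * I * unitTangent γ s) s := by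
  have hβ : HasDerivAt (fun t => curvInt γ t 0) (γ s) s :=
    (hγ.integral_hasStrictDerivAt 0 s).hasDerivAt
  convert (hβ.neg.ofReal_comp.mul_const I).cexp using 1
  · rfl
  · simp only [unitTangent, Pi.neg_apply, ofReal_neg]
    ring

theorem continuous_unitTangent (hγ : Continuous γ) : Continuous (unitTangent γ) :=
  continuous_iff_continuousAt.2 fun s => (hasDerivAt_unitTangent hγ s).continuousAt

theorem curve_eq_integral (hγ : Continuous γ) (s : ℝ) :
    curve γ s = ∫ x in 0..s, unitTangent γ x := by
  have hβ : Continuous fun x => curvInt γ x 0 :=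
    continuous_primitive (μ := volume) hγ.intervalIntegrable 0
  have hcos : IntervalIntegrable (fun x => (Real.cos (curvInt γ x 0) : ℂ)) volume 0 s := by
    apply Continuous.intervalIntegrable; fun_prop
  have hsin : IntervalIntegrable (fun x => (Real.sin (curvInt γ x 0) : ℂ) * I) volume 0 s := by
    apply Continuous.intervalIntegrable; fun_prop
  simp_rw [unitTangent_eq]
  rw [integral_sub hcos hsin, intervalIntegral.integral_mul_const, integral_ofReal,
    integral_ofReal, curve, curveX, curveY]
  push_cast
  ring

theorem curve_sub_curve (hγ : Continuous γ) (a b : ℝ) :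
    curve γ b - curve γ a = ∫ x in a..b, unitTangent γ x := by
  rw [curve_eq_integral hγ, curve_eq_integral hγ]
  exact integral_interval_sub_left ((continuous_unitTangent hγ).intervalIntegrable _ _)
    ((continuous_unitTangent hγ).intervalIntegrable _ _)

theorem continuous_curve (hγ : Continuous γ) : Continuous (curve γ) := by
  simpa only [funext (curve_eq_integral hγ)] using
    continuous_primitive ((continuous_unitTangent hγ).intervalIntegrable) 0

theorem norm_curve_sub_le (hγ : Continuous γ) (s s' : ℝ) :
    ‖curve γ s - curve γ s'‖ ≤ |s - s'| := by
  rw [curve_sub_curve hγ]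
  simpa using norm_integral_le_of_norm_le_const (a := s') (b := s) (C := 1)
    fun x _ => (norm_unitTangent γ x).le

theorem norm_curve_sub_lt (hγ : Continuous γ) {s s' : ℝ} (hss' : s ≠ s')
    (hT : unitTangent γ s ≠ unitTangent γ s') : ‖curve γ s - curve γ s'‖ < |s - s'| := by
  wlog h : s' < s generalizing s s'
  · rw [norm_sub_rev, abs_sub_comm]
    exact this hss'.symm hT.symm (hss'.lt_or_gt.resolve_right h)
  rw [curve_sub_curve hγ, abs_of_pos (sub_pos.2 h)]
  exact norm_intervalIntegral_lt_of_ne h (continuous_unitTangent hγ).continuousOn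
    (fun x _ => (norm_unitTangent γ x).le) hT.symm

theorem unitTangent_eventually_ne (hγ : Continuous γ) {s₀ : ℝ} (hs₀ : γ s₀ ≠ 0) :
    ∀ᶠ s in 𝓝[≠] s₀, unitTangent γ s ≠ unitTangent γ s₀ :=
  (hasDerivAt_unitTangent hγ s₀).eventually_ne <|
    mul_ne_zero (mul_ne_zero (neg_ne_zero.2 (ofReal_ne_zero.2 hs₀)) I_ne_zero) (exp_ne_zero _)

end Curve

/-- the chord inequality `|Γ(s) − Γ(s')| ≤ |s − s'|`, and, if the curvature is
not identically zero, strictness of the inequality on some nonempty open set of pairs. -/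
theorem chord_le_arc_and_strict (γ : ℝ → ℝ) (hγ : Continuous γ) :
    (∀ s s' : ℝ,
      Real.sqrt ((curveX γ s - curveX γ s') ^ 2 + (curveY γ s - curveY γ s') ^ 2) ≤ |s - s'|) ∧
    ((∃ s₀ : ℝ, γ s₀ ≠ 0) → ∃ U : Set (ℝ × ℝ), IsOpen U ∧ U.Nonempty ∧
      ∀ p ∈ U, Real.sqrt ((curveX γ p.1 - curveX γ p.2) ^ 2
        + (curveY γ p.1 - curveY γ p.2) ^ 2) < |p.1 - p.2|) := by
  simp only [sqrt_chord_eq_norm_curve_sub]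
  refine ⟨norm_curve_sub_le hγ, fun ⟨s₀, hs₀⟩ => ?_⟩
  obtain ⟨s, hT, hs⟩ := ((unitTangent_eventually_ne hγ hs₀).and self_mem_nhdsWithin).exists
  have hΓ := continuous_curve hγ
  refine ⟨{p | ‖curve γ p.1 - curve γ p.2‖ < |p.1 - p.2|},
    isOpen_lt (by fun_prop) (by fun_prop), ⟨(s, s₀), norm_curve_sub_lt hγ hs hT⟩, fun _ hp => hp⟩
end

section
/- Strict positivity of the curvature-induced kernel difference: let γ : ℝ → ℝ be continuous and not identically zero, let Γ be the curve reconstructed from γ, and let κ > 0. Then for all s ≠ s' the quantity K₀(κ|Γ(s) − Γ(s')|) − K₀(κ|s − s'|) is nonnegative (as an element of [0,∞], with the convention K₀(0) = +∞), and its integral over (s,s') ∈ ℝ², taken in [0,∞], is strictly positive: ∫_{ℝ²} [K₀(κ|Γ(s) − Γ(s')|) − K₀(κ|s − s'|)] ds ds' > 0. -/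
open MeasureTheory intervalIntegral

open scoped ENNReal

/-- The Macdonald function `K₀(x) = ∫₀^∞ exp(−x cosh t) dt` for `x > 0`. -/
noncomputable def K0 (x : ℝ) : ℝ := ∫ t in Set.Ioi (0:ℝ), Real.exp (-x * Real.cosh t)

/-- The Macdonald function as a `[0,∞]`-valued function, with `K₀(0) = ∞`. -/
noncomputable def K0e (x : ℝ) : ℝ≥0∞ := if x = 0 then ⊤ else ENNReal.ofReal (K0 x)

/-- The chord length `|Γ(s) − Γ(s')|` of the reconstructed curve. -/
noncomputable def chordDist (γ : ℝ → ℝ) (s s' : ℝ) : ℝ :=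
  Real.sqrt ((curveX γ s - curveX γ s') ^ 2 + (curveY γ s - curveY γ s') ^ 2)

/-!
`Γ` has unit speed and tangent angle `-β(·, 0)`, so a chord is never longer than the arc it
spans: projecting `Γ(s) - Γ(s')` onto its own direction writes its length as
`∫_{s'}^{s} cos (β(ξ, 0) - θ) dξ ≤ s - s'` for a suitable angle `θ`. The inequality is strict as soon as the tangent
turns by an angle that is not a multiple of `2π`, which happens for `s' < s₀ < s` close to a
point `s₀` with `γ s₀ ≠ 0`. Since `K₀` is strictly decreasing on `[0, ∞)` (with `K₀ 0 = ∞`), the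
measurable integrand is nonnegative everywhere and positive on an open box, so its integral is
positive.
-/

open Real Set Topology

lemma self_le_cosh (t : ℝ) : t ≤ cosh t := by
  rcases le_total 0 t with ht | ht
  · exact (self_le_sinh_iff.2 ht).trans (sinh_lt_cosh t).le
  · linarith [one_le_cosh t]

lemma integrableOn_exp_neg_mul_cosh {x : ℝ} (hx : 0 < x) :
    IntegrableOn (fun t => exp (-x * cosh t)) (Ioi 0) := by
  refine (exp_neg_integrableOn_Ioi 0 hx).mono' (by fun_prop) (ae_of_all _ fun t => ?_)
  rw [norm_of_nonneg (exp_pos _).le, exp_le_exp]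
  nlinarith [self_le_cosh t]

lemma K0_nonneg (x : ℝ) : 0 ≤ K0 x :=
  setIntegral_nonneg measurableSet_Ioi fun _ _ => (exp_pos _).le

lemma strictAntiOn_K0 : StrictAntiOn K0 (Ioi 0) := by
  intro a ha b _ hab
  have hia := integrableOn_exp_neg_mul_cosh ha
  have hib := integrableOn_exp_neg_mul_cosh (ha.out.trans hab)
  have hpos : ∀ t, 0 < exp (-a * cosh t) - exp (-b * cosh t) := fun t => by
    rw [sub_pos, exp_lt_exp]
    nlinarith [one_le_cosh t]
  rw [← sub_pos, K0, K0, ← integral_sub hia hib,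
    setIntegral_pos_iff_support_of_nonneg_ae (ae_of_all _ fun t => (hpos t).le) (hia.sub hib),
    Function.support_eq_univ fun t => (hpos t).ne', univ_inter, Real.volume_Ioi]
  exact ENNReal.zero_lt_top

lemma strictAntiOn_K0e : StrictAntiOn K0e (Ici 0) := by
  intro a ha b hb hab
  have hb0 : b ≠ 0 := (ha.out.trans_lt hab).ne'
  rcases ha.out.eq_or_lt with rfl | ha0
  · simp [K0e, hb0]
  · rw [K0e, K0e, if_neg hb0, if_neg ha0.ne', ENNReal.ofReal_lt_ofReal_iff_of_nonneg (K0_nonneg b)]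
    exact strictAntiOn_K0 ha0 (ha0.trans hab) hab

lemma measurable_K0e : Measurable K0e := by
  have hK0 : Measurable K0 :=
    (Continuous.stronglyMeasurable (f := fun p : ℝ × ℝ => exp (-p.1 * cosh p.2))
      (by fun_prop)).integral_prod_right'.measurable
  exact Measurable.ite (measurableSet_singleton 0) measurable_const
    (ENNReal.measurable_ofReal.comp hK0)

section Chord

variable {φ : ℝ → ℝ} {a b : ℝ}

lemma exists_sqrt_sq_add_sq_integral_eq (hφ : Continuous φ) (a b : ℝ) :
    ∃ θ, √((∫ x in a..b, cos (φ x)) ^ 2 + (∫ x in a..b, sin (φ x)) ^ 2)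
      = ∫ x in a..b, cos (φ x - θ) := by
  set z : ℂ := ⟨∫ x in a..b, cos (φ x), ∫ x in a..b, sin (φ x)⟩
  refine ⟨z.arg, ?_⟩
  have hcos := Complex.norm_mul_cos_arg z
  have hsin := Complex.norm_mul_sin_arg z
  have hz : √((∫ x in a..b, cos (φ x)) ^ 2 + (∫ x in a..b, sin (φ x)) ^ 2) = ‖z‖ := by
    rw [Complex.norm_def, Complex.normSq_mk, sq, sq]
  simp only [cos_sub]
  rw [intervalIntegral.integral_add (Continuous.intervalIntegrable (by fun_prop) _ _)
      (Continuous.intervalIntegrable (by fun_prop) _ _),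
    intervalIntegral.integral_mul_const, intervalIntegral.integral_mul_const, hz]
  change ‖z‖ = z.re * cos z.arg + z.im * sin z.arg
  rw [← hcos, ← hsin]
  linear_combination (-‖z‖) * sin_sq_add_cos_sq z.arg

lemma sqrt_sq_add_sq_integral_le (hφ : Continuous φ) (hab : a ≤ b) :
    √((∫ x in a..b, cos (φ x)) ^ 2 + (∫ x in a..b, sin (φ x)) ^ 2) ≤ b - a := by
  obtain ⟨θ, hθ⟩ := exists_sqrt_sq_add_sq_integral_eq hφ a b
  calc _ = ∫ x in a..b, cos (φ x - θ) := hθ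
    _ ≤ ∫ _ in a..b, (1 : ℝ) :=
      intervalIntegral.integral_mono_on hab
        ((continuous_cos.comp (hφ.sub continuous_const)).intervalIntegrable _ _)
        intervalIntegrable_const fun x _ => cos_le_one _
    _ = b - a := by simp

lemma sqrt_sq_add_sq_integral_lt (hφ : Continuous φ) (hab : a < b)
    (hφab : cos (φ b - φ a) ≠ 1) :
    √((∫ x in a..b, cos (φ x)) ^ 2 + (∫ x in a..b, sin (φ x)) ^ 2) < b - a := by
  obtain ⟨θ, hθ⟩ := exists_sqrt_sq_add_sq_integral_eq hφ a b
  have hlt : ∃ c ∈ Icc a b, cos (φ c - θ) < 1 := by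
    by_contra! h
    have ha := le_antisymm (cos_le_one _) (h a (left_mem_Icc.2 hab.le))
    have hb := le_antisymm (cos_le_one _) (h b (right_mem_Icc.2 hab.le))
    have hsa : sin (φ a - θ) = 0 := by nlinarith [sin_sq_add_cos_sq (φ a - θ)]
    have hsb : sin (φ b - θ) = 0 := by nlinarith [sin_sq_add_cos_sq (φ b - θ)]
    apply hφab
    rw [show φ b - φ a = (φ b - θ) - (φ a - θ) by ring, cos_sub, ha, hb, hsa, hsb]
    norm_num
  calc _ = ∫ x in a..b, cos (φ x - θ) := hθ
    _ < ∫ _ in a..b, (1 : ℝ) :=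
      intervalIntegral.integral_lt_integral_of_continuousOn_of_le_of_exists_lt hab
        (continuous_cos.comp (hφ.sub continuous_const)).continuousOn continuousOn_const
        (fun x _ => cos_le_one _) hlt
    _ = b - a := by simp

end Chord

section Curve

variable {γ : ℝ → ℝ}

lemma continuous_curvInt (hγ : Continuous γ) : Continuous fun s => curvInt γ s 0 :=
  intervalIntegral.continuous_primitive (hγ.intervalIntegrable) 0

lemma continuous_chordDist (hγ : Continuous γ) :
    Continuous fun p : ℝ × ℝ => chordDist γ p.1 p.2 := by
  have hβ := continuous_curvInt hγ
  have hX : Continuous (curveX γ) := intervalIntegral.continuous_primitive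
    (continuous_cos.comp hβ).intervalIntegrable 0
  have hY : Continuous (curveY γ) := (intervalIntegral.continuous_primitive
    (continuous_sin.comp hβ).intervalIntegrable 0).neg
  unfold chordDist
  fun_prop

lemma chordDist_comm (s s' : ℝ) : chordDist γ s s' = chordDist γ s' s := by
  simp only [chordDist, ← neg_sub (curveX γ s), ← neg_sub (curveY γ s), neg_sq]

lemma chordDist_eq_sqrt (hγ : Continuous γ) (s s' : ℝ) :
    chordDist γ s s' = √((∫ ξ in s'..s, cos (curvInt γ ξ 0)) ^ 2
      + (∫ ξ in s'..s, sin (curvInt γ ξ 0)) ^ 2) := by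
  have hcos := continuous_cos.comp (continuous_curvInt hγ)
  have hsin := continuous_sin.comp (continuous_curvInt hγ)
  have hX : curveX γ s - curveX γ s' = ∫ ξ in s'..s, cos (curvInt γ ξ 0) :=
    intervalIntegral.integral_interval_sub_left (hcos.intervalIntegrable _ _)
      (hcos.intervalIntegrable _ _)
  have hY : curveY γ s - curveY γ s' = -∫ ξ in s'..s, sin (curvInt γ ξ 0) := by
    rw [curveY, curveY, neg_sub_neg, ← neg_sub]
    exact congrArg Neg.neg <| intervalIntegral.integral_interval_sub_left
      (hsin.intervalIntegrable _ _) (hsin.intervalIntegrable _ _)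
  rw [chordDist, hX, hY, neg_sq]

lemma chordDist_le_abs_sub (hγ : Continuous γ) (s s' : ℝ) : chordDist γ s s' ≤ |s - s'| := by
  wlog h : s' ≤ s generalizing s s'
  · rw [chordDist_comm, abs_sub_comm]
    exact this s' s (le_of_not_ge h)
  rw [chordDist_eq_sqrt hγ, abs_of_nonneg (sub_nonneg.2 h)]
  exact sqrt_sq_add_sq_integral_le (continuous_curvInt hγ) h

lemma chordDist_lt_sub (hγ : Continuous γ) {s s' : ℝ} (h : s' < s)
    (hβ : cos (curvInt γ s 0 - curvInt γ s' 0) ≠ 1) : chordDist γ s s' < s - s' := by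
  rw [chordDist_eq_sqrt hγ]
  exact sqrt_sq_add_sq_integral_lt (continuous_curvInt hγ) h hβ

/-- Near a point where `γ ≠ 0` the tangent angle is strictly monotone and turns by less than
`2π`, so it never returns to the same direction. -/
lemma exists_chordDist_lt_abs_sub (hγ : Continuous γ) {s₀ : ℝ} (hs₀ : γ s₀ ≠ 0) :
    ∃ ε > 0, ∀ s ∈ Ioo s₀ (s₀ + ε), ∀ s' ∈ Ioo (s₀ - ε) s₀, chordDist γ s s' < |s - s'| := by
  have hβ := continuous_curvInt hγ
  have hangle : ∀ᶠ ξ in 𝓝 s₀, |curvInt γ ξ 0 - curvInt γ s₀ 0| < π :=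
    ((hβ.sub continuous_const).abs.tendsto' s₀ 0 (by simp)).eventually (gt_mem_nhds pi_pos)
  have hsign : ∀ᶠ ξ in 𝓝 s₀, 0 < γ ξ * γ s₀ :=
    ((hγ.mul continuous_const).tendsto s₀).eventually (lt_mem_nhds (mul_self_pos.2 hs₀))
  obtain ⟨ε, hε, hball⟩ := Metric.eventually_nhds_iff.1 (hangle.and hsign)
  have hnear : ∀ ξ, s₀ - ε < ξ → ξ < s₀ + ε →
      |curvInt γ ξ 0 - curvInt γ s₀ 0| < π ∧ 0 < γ ξ * γ s₀ := fun ξ h₁ h₂ =>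
    hball (by rw [Real.dist_eq, abs_sub_lt_iff]; constructor <;> linarith)
  refine ⟨ε, hε, fun s hs s' hs' => ?_⟩
  have hss : s' < s := hs'.2.trans hs.1
  rw [abs_of_pos (sub_pos.2 hss)]
  refine chordDist_lt_sub hγ hss ?_
  have hturn : 0 < (curvInt γ s 0 - curvInt γ s' 0) * γ s₀ := by
    rw [show curvInt γ s 0 - curvInt γ s' 0 = ∫ ξ in s'..s, γ ξ from
      intervalIntegral.integral_interval_sub_left (hγ.intervalIntegrable _ _)
        (hγ.intervalIntegrable _ _), ← intervalIntegral.integral_mul_const]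
    exact intervalIntegral_pos_of_pos_on ((hγ.mul continuous_const).intervalIntegrable _ _)
      (fun ξ hξ => (hnear ξ (by linarith [hs'.1, hξ.1]) (by linarith [hs.2, hξ.2])).2) hss
  obtain ⟨hs₁, hs₂⟩ := abs_lt.1 (hnear s (by linarith [hs.1]) hs.2).1
  obtain ⟨hs'₁, hs'₂⟩ := abs_lt.1 (hnear s' hs'.1 (by linarith [hs'.2])).1
  rw [Ne, cos_eq_one_iff_of_lt_of_lt (by linarith) (by linarith)]
  rintro hzero
  simp [hzero] at hturn

end Curve

/-- for a continuous, not identically vanishing curvature `γ` and `κ > 0`,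
the kernel difference `K₀(κ|Γ(s) − Γ(s')|) − K₀(κ|s − s'|)` is nonnegative off the diagonal
(that is, `K₀(κ|s−s'|) ≤ K₀(κ|Γ(s)−Γ(s')|)` in `[0,∞]`), and its integral over `ℝ²`,
taken in `[0,∞]`, is strictly positive. -/
theorem kernel_difference_positive (γ : ℝ → ℝ) (hγ : Continuous γ)
    (hne : ∃ s : ℝ, γ s ≠ 0) (κ : ℝ) (hκ : 0 < κ) :
    (∀ s s' : ℝ, s ≠ s' → K0e (κ * |s - s'|) ≤ K0e (κ * chordDist γ s s')) ∧
    0 < ∫⁻ p : ℝ × ℝ, (K0e (κ * chordDist γ p.1 p.2) - K0e (κ * |p.1 - p.2|)) := by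
  refine ⟨fun s s' _ => strictAntiOn_K0e.antitoneOn (mul_nonneg hκ.le (sqrt_nonneg _))
    (mul_nonneg hκ.le (abs_nonneg _))
    (mul_le_mul_of_nonneg_left (chordDist_le_abs_sub hγ s s') hκ.le), ?_⟩
  obtain ⟨s₀, hs₀⟩ := hne
  obtain ⟨ε, hε, hlt⟩ := exists_chordDist_lt_abs_sub hγ hs₀
  have hmeas : Measurable fun p : ℝ × ℝ =>
      K0e (κ * chordDist γ p.1 p.2) - K0e (κ * |p.1 - p.2|) :=
    (measurable_K0e.comp (continuous_const.mul (continuous_chordDist hγ)).measurable).sub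
      (measurable_K0e.comp (by fun_prop : Continuous fun p : ℝ × ℝ => κ * |p.1 - p.2|).measurable)
  rw [lintegral_pos_iff_support hmeas]
  have hbox : IsOpen (Ioo s₀ (s₀ + ε) ×ˢ Ioo (s₀ - ε) s₀) := isOpen_Ioo.prod isOpen_Ioo
  refine (hbox.measure_pos volume ⟨(s₀ + ε / 2, s₀ - ε / 2), ?_⟩).trans_le
    (measure_mono fun p hp => ?_)
  · exact ⟨⟨by linarith, by linarith⟩, by linarith, by linarith⟩
  · refine (tsub_pos_of_lt (strictAntiOn_K0e ?_ ?_ ?_)).ne'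
    · exact mul_nonneg hκ.le (sqrt_nonneg _)
    · exact mul_nonneg hκ.le (abs_nonneg _)
    · exact mul_lt_mul_of_pos_left (hlt p.1 hp.1 p.2 hp.2) hκ
end

section
/- From the Birman–Schwinger fixed-point equation to the eigenvalue equation in one dimension: let a > 0, let V : ℝ → [0,∞) be bounded measurable with V = 0 outside [−a,a], and let κ > 0. Suppose g : ℝ → ℝ is bounded measurable, vanishes outside [−a,a], and satisfies g(u) = ∫_ℝ √(V(u))·(e^{−κ|u−u'|}/(2κ))·√(V(u'))·g(u') du' for almost every u. Define φ(u) = ∫_ℝ (e^{−κ|u−u'|}/(2κ))·√(V(u'))·g(u') du'. Then φ is bounded and continuous, √(V(u))·φ(u) = g(u) for almost every u, and ∫_ℝ φ(u)θ''(u) du = ∫_ℝ (κ² − V(u))·φ(u)θ(u) du for every θ ∈ C_c^∞(ℝ). -/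
open MeasureTheory Filter Topology Set


lemma evZero_atTop {f : ℝ → ℝ} (hf : HasCompactSupport f) : ∀ᶠ x in atTop, f x = 0 := by
  rw [hasCompactSupport_iff_eventuallyEq, Filter.coclosedCompact_eq_cocompact] at hf
  exact hf.filter_mono atTop_le_cocompact

lemma evZero_atBot {f : ℝ → ℝ} (hf : HasCompactSupport f) : ∀ᶠ x in atBot, f x = 0 := by
  rw [hasCompactSupport_iff_eventuallyEq, Filter.coclosedCompact_eq_cocompact] at hf
  exact hf.filter_mono atBot_le_cocompact

lemma green_int (κ : ℝ) (hκ : 0 < κ) (θ : ℝ → ℝ) (hθ : ContDiff ℝ (⊤ : ℕ∞) θ)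
    (hθc : HasCompactSupport θ) (v : ℝ) :
    ∫ u : ℝ, Real.exp (-κ * |u - v|) * deriv (deriv θ) u
      = κ ^ 2 * (∫ u : ℝ, Real.exp (-κ * |u - v|) * θ u) - 2 * κ * θ v := by
  have hθ' : ContDiff ℝ (⊤ : ℕ∞) θ := hθ.of_le (by simp)
  have hθ1 : ContDiff ℝ (⊤ : ℕ∞) (deriv θ) := (contDiff_infty_iff_deriv.mp hθ').2
  have hθ2c : Continuous (deriv (deriv θ)) := ((contDiff_infty_iff_deriv.mp hθ1).2).continuous
  have hd : ∀ x : ℝ, HasDerivAt θ (deriv θ x) x :=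
    fun x => (hθ.differentiable (by simp) x).hasDerivAt
  have hd1 : ∀ x : ℝ, HasDerivAt (deriv θ) (deriv (deriv θ) x) x :=
    fun x => (hθ1.differentiable (by simp) x).hasDerivAt
  have hecont : Continuous (fun u : ℝ => Real.exp (-κ * |u - v|)) :=
    Real.continuous_exp.comp (continuous_const.mul ((continuous_id.sub continuous_const).abs))
  -- integrability of the two full-line integrands
  have hIθ : Integrable (fun u : ℝ => Real.exp (-κ * |u - v|) * θ u) :=
    (hecont.mul hθ'.continuous).integrable_of_hasCompactSupport hθc.mul_left
  have hIθ2 : Integrable (fun u : ℝ => Real.exp (-κ * |u - v|) * deriv (deriv θ) u) :=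
    (hecont.mul hθ2c).integrable_of_hasCompactSupport hθc.deriv.deriv.mul_left
  have hψc : HasCompactSupport (fun u : ℝ => deriv (deriv θ) u - κ ^ 2 * θ u) := by
    apply HasCompactSupport.intro (hθc.isCompact.union hθc.deriv.deriv.isCompact)
    intro x hx
    simp only [Set.mem_union, not_or] at hx
    rw [image_eq_zero_of_notMem_tsupport hx.1, image_eq_zero_of_notMem_tsupport hx.2]
    ring
  have key : ∫ u : ℝ, Real.exp (-κ * |u - v|) * (deriv (deriv θ) u - κ ^ 2 * θ u)
      = -(2 * κ) * θ v := by
    have hImix : Integrable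
        (fun u : ℝ => Real.exp (-κ * |u - v|) * (deriv (deriv θ) u - κ ^ 2 * θ u)) := by
      have : (fun u : ℝ => Real.exp (-κ * |u - v|) * (deriv (deriv θ) u - κ ^ 2 * θ u))
          = fun u => Real.exp (-κ * |u - v|) * deriv (deriv θ) u
            - κ ^ 2 * (Real.exp (-κ * |u - v|) * θ u) := by funext u; ring
      rw [this]
      exact hIθ2.sub (hIθ.const_mul _)
    -- right half
    have hRcongr : EqOn (fun u : ℝ => Real.exp (-κ * |u - v|) * (deriv (deriv θ) u - κ ^ 2 * θ u))
        (fun u : ℝ => Real.exp (-κ * (u - v)) * (deriv (deriv θ) u - κ ^ 2 * θ u)) (Ioi v) := by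
      intro x hx
      simp only
      rw [abs_of_nonneg (by simp only [mem_Ioi] at hx; linarith)]
    have hLcongr : EqOn (fun u : ℝ => Real.exp (-κ * |u - v|) * (deriv (deriv θ) u - κ ^ 2 * θ u))
        (fun u : ℝ => Real.exp (κ * (u - v)) * (deriv (deriv θ) u - κ ^ 2 * θ u)) (Iic v) := by
      intro x hx
      simp only
      rw [abs_of_nonpos (by simp only [mem_Iic] at hx; linarith)]
      ring_nf
    have hR : ∫ u in Ioi v, Real.exp (-κ * (u - v)) * (deriv (deriv θ) u - κ ^ 2 * θ u)
        = -(deriv θ v + κ * θ v) := by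
      have hder : ∀ x ∈ Ici v, HasDerivAt
          (fun u : ℝ => Real.exp (-κ * (u - v)) * (deriv θ u + κ * θ u))
          (Real.exp (-κ * (x - v)) * (deriv (deriv θ) x - κ ^ 2 * θ x)) x := by
        intro x _
        have he : HasDerivAt (fun u : ℝ => Real.exp (-κ * (u - v)))
            (Real.exp (-κ * (x - v)) * (-κ)) x :=
          (((hasDerivAt_id x).sub_const v).const_mul (-κ)).exp.congr_deriv (by simp only [id_eq]; ring_nf)
        have := he.mul ((hd1 x).add ((hd x).const_mul κ))
        exact this.congr_deriv (by simp only [Pi.add_apply, Pi.sub_apply]; ring)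
      have hint : IntegrableOn
          (fun u : ℝ => Real.exp (-κ * (u - v)) * (deriv (deriv θ) u - κ ^ 2 * θ u)) (Ioi v) := by
        refine Integrable.integrableOn ?_
        have hc : Continuous fun u : ℝ => Real.exp (-κ * (u - v)) :=
          Real.continuous_exp.comp (continuous_const.mul (continuous_id.sub continuous_const))
        exact (hc.mul (hθ2c.sub (continuous_const.mul hθ'.continuous))).integrable_of_hasCompactSupport
          (HasCompactSupport.mul_left hψc)
      have htend : Tendsto (fun u : ℝ => Real.exp (-κ * (u - v)) * (deriv θ u + κ * θ u))
          atTop (𝓝 0) := by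
        apply Tendsto.congr' _ tendsto_const_nhds
        filter_upwards [evZero_atTop hθc, evZero_atTop hθc.deriv] with x h1 h2
        simp [h1, h2]
      have := integral_Ioi_of_hasDerivAt_of_tendsto' hder hint htend
      rw [this]
      simp
    have hL : ∫ u in Iic v, Real.exp (κ * (u - v)) * (deriv (deriv θ) u - κ ^ 2 * θ u)
        = deriv θ v - κ * θ v := by
      have hder : ∀ x ∈ Iic v, HasDerivAt
          (fun u : ℝ => Real.exp (κ * (u - v)) * (deriv θ u - κ * θ u))
          (Real.exp (κ * (x - v)) * (deriv (deriv θ) x - κ ^ 2 * θ x)) x := by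
        intro x _
        have he : HasDerivAt (fun u : ℝ => Real.exp (κ * (u - v)))
            (Real.exp (κ * (x - v)) * κ) x :=
          (((hasDerivAt_id x).sub_const v).const_mul κ).exp.congr_deriv (by simp only [id_eq]; ring_nf)
        have := he.mul ((hd1 x).sub ((hd x).const_mul κ))
        exact this.congr_deriv (by simp only [Pi.add_apply, Pi.sub_apply]; ring)
      have hint : IntegrableOn
          (fun u : ℝ => Real.exp (κ * (u - v)) * (deriv (deriv θ) u - κ ^ 2 * θ u)) (Iic v) := by
        refine Integrable.integrableOn ?_
        have hc : Continuous fun u : ℝ => Real.exp (κ * (u - v)) :=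
          Real.continuous_exp.comp (continuous_const.mul (continuous_id.sub continuous_const))
        exact (hc.mul (hθ2c.sub (continuous_const.mul hθ'.continuous))).integrable_of_hasCompactSupport
          (HasCompactSupport.mul_left hψc)
      have htend : Tendsto (fun u : ℝ => Real.exp (κ * (u - v)) * (deriv θ u - κ * θ u))
          atBot (𝓝 0) := by
        apply Tendsto.congr' _ tendsto_const_nhds
        filter_upwards [evZero_atBot hθc, evZero_atBot hθc.deriv] with x h1 h2
        simp [h1, h2]
      have := integral_Iic_of_hasDerivAt_of_tendsto' hder hint htend
      rw [this]
      simp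
    rw [← intervalIntegral.integral_Iic_add_Ioi hImix.integrableOn hImix.integrableOn,
      setIntegral_congr_fun measurableSet_Iic hLcongr,
      setIntegral_congr_fun measurableSet_Ioi hRcongr, hL, hR]
    ring
  have split : ∫ u : ℝ, Real.exp (-κ * |u - v|) * (deriv (deriv θ) u - κ ^ 2 * θ u)
      = (∫ u : ℝ, Real.exp (-κ * |u - v|) * deriv (deriv θ) u)
        - κ ^ 2 * ∫ u : ℝ, Real.exp (-κ * |u - v|) * θ u := by
    have : (fun u : ℝ => Real.exp (-κ * |u - v|) * (deriv (deriv θ) u - κ ^ 2 * θ u))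
        = fun u => Real.exp (-κ * |u - v|) * deriv (deriv θ) u
          - κ ^ 2 * (Real.exp (-κ * |u - v|) * θ u) := by funext u; ring
    rw [this, integral_sub hIθ2 (hIθ.const_mul _), integral_const_mul]
  rw [split] at key
  linear_combination key

/-- a measurable function, bounded, supported on a finite-measure set, is integrable. -/
lemma integrable_of_bdd_supp {f : ℝ → ℝ} {s : Set ℝ} (hs : MeasurableSet s)
    (hfin : volume s ≠ ⊤) (hmeas : AEStronglyMeasurable f volume)
    {C : ℝ} (hbd : ∀ u, |f u| ≤ C) (hsupp : ∀ u ∉ s, f u = 0) :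
    Integrable f := by
  have hind : f = s.indicator f := by
    funext u; by_cases h : u ∈ s
    · simp [Set.indicator_of_mem h]
    · simp [Set.indicator_of_notMem h, hsupp u h]
  rw [hind, integrable_indicator_iff hs]
  exact Measure.integrableOn_of_bounded hfin hmeas
    (ae_of_all _ fun u => by simpa [Real.norm_eq_abs] using hbd u)

/-- pointwise bound on the kernel. -/
lemma kernel_bd (κ : ℝ) (hκ : 0 < κ) (x : ℝ) :
    |Real.exp (-κ * |x|) / (2 * κ)| ≤ 1 / (2 * κ) := by
  rw [abs_div, abs_of_pos (Real.exp_pos _), abs_of_pos (by positivity : (0:ℝ) < 2 * κ)]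
  gcongr
  calc Real.exp (-κ * |x|) ≤ Real.exp 0 := by
        apply Real.exp_le_exp.2
        have : 0 ≤ κ * |x| := by positivity
        linarith
    _ = 1 := Real.exp_zero

/-- boundedness of the convolution with the Green kernel. -/
lemma bdd_conv (κ : ℝ) (hκ : 0 < κ) {f : ℝ → ℝ} {s : Set ℝ}
    (hsm : MeasurableSet s) (hfin : volume s ≠ ⊤) (hmeas : AEStronglyMeasurable f volume)
    {C : ℝ} (hbd : ∀ u, |f u| ≤ C) (hsupp : ∀ u ∉ s, f u = 0) (u : ℝ) :
    |∫ u' : ℝ, Real.exp (-κ * |u - u'|) / (2 * κ) * f u'|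
      ≤ 1 / (2 * κ) * C * (volume s).toReal := by
  have h0 : ∫ u' : ℝ, Real.exp (-κ * |u - u'|) / (2 * κ) * f u'
      = ∫ u' in s, Real.exp (-κ * |u - u'|) / (2 * κ) * f u' :=
    (setIntegral_eq_integral_of_forall_compl_eq_zero
      (fun x hx => by rw [hsupp x hx, mul_zero])).symm
  rw [h0]
  have := norm_setIntegral_le_of_norm_le_const (μ := volume) (s := s)
    (C := 1 / (2 * κ) * C) hfin.lt_top
    (f := fun u' => Real.exp (-κ * |u - u'|) / (2 * κ) * f u') ?_
  · simpa [Real.norm_eq_abs, Measure.real] using this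
  · intro x _
    rw [Real.norm_eq_abs, abs_mul]
    have h1 := kernel_bd κ hκ (u - x)
    have h2 := hbd x
    exact mul_le_mul h1 h2 (abs_nonneg _) (by positivity)

/-- continuity of the convolution with the Green kernel. -/
lemma cont_conv (κ : ℝ) (hκ : 0 < κ) {f : ℝ → ℝ} {s : Set ℝ}
    (hsm : MeasurableSet s) (hfin : volume s ≠ ⊤) (hmeas : Measurable f)
    {C : ℝ} (hbd : ∀ u, |f u| ≤ C) (hsupp : ∀ u ∉ s, f u = 0) :
    Continuous fun u : ℝ => ∫ u' : ℝ, Real.exp (-κ * |u - u'|) / (2 * κ) * f u' := by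
  rw [continuous_iff_continuousAt]
  intro u₀
  apply continuousAt_of_dominated (bound := s.indicator fun _ => 1 / (2 * κ) * C)
  · apply Eventually.of_forall
    intro u
    exact (((Real.continuous_exp.comp
      (continuous_const.mul (continuous_const.sub continuous_id).abs)).div_const _
      ).measurable.mul hmeas).aestronglyMeasurable
  · apply Eventually.of_forall
    intro u
    apply ae_of_all
    intro x
    by_cases hx : x ∈ s
    · rw [Set.indicator_of_mem hx, Real.norm_eq_abs, abs_mul]
      exact mul_le_mul (kernel_bd κ hκ (u - x)) (hbd x) (abs_nonneg _) (by positivity)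
    · rw [Set.indicator_of_notMem hx, hsupp x hx, mul_zero, norm_zero]
  · rw [integrable_indicator_iff hsm]
    exact integrableOn_const hfin
  · apply ae_of_all
    intro x
    apply Continuous.continuousAt
    exact ((Real.continuous_exp.comp
      (continuous_const.mul ((continuous_id.sub continuous_const)).abs)).div_const _).mul
      continuous_const

/-- from the Birman–Schwinger fixed-point equation back to the weak
eigenvalue equation in one dimension. If `g` solves the Birman–Schwinger equation,
then `φ(u) = ∫ (e^{−κ|u−u'|}/(2κ)) √V(u') g(u') du'` is bounded and continuous,
satisfies `√V·φ = g` a.e., and solves the weak form of `−φ'' − Vφ = −κ²φ`. -/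
theorem BS_to_weak_eigen (a : ℝ) (ha : 0 < a) (V : ℝ → ℝ) (hVmeas : Measurable V)
    (hVpos : ∀ u, 0 ≤ V u) (hVbd : ∃ C : ℝ, ∀ u, V u ≤ C)
    (hVsupp : ∀ u : ℝ, u ∉ Set.Icc (-a) a → V u = 0)
    (κ : ℝ) (hκ : 0 < κ) (g : ℝ → ℝ) (hgmeas : Measurable g)
    (hgbd : ∃ C : ℝ, ∀ u, |g u| ≤ C)
    (hgsupp : ∀ u : ℝ, u ∉ Set.Icc (-a) a → g u = 0)
    (hBS : ∀ᵐ u : ℝ, g u = ∫ u' : ℝ,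
      Real.sqrt (V u) * (Real.exp (-κ * |u - u'|) / (2 * κ)) * Real.sqrt (V u') * g u')
    (φ : ℝ → ℝ)
    (hφ : ∀ u : ℝ, φ u = ∫ u' : ℝ,
      Real.exp (-κ * |u - u'|) / (2 * κ) * Real.sqrt (V u') * g u') :
    (∃ C : ℝ, ∀ u, |φ u| ≤ C) ∧ Continuous φ ∧
    (∀ᵐ u : ℝ, Real.sqrt (V u) * φ u = g u) ∧
    (∀ θ : ℝ → ℝ, ContDiff ℝ (⊤ : ℕ∞) θ → HasCompactSupport θ →
      ∫ u : ℝ, φ u * deriv (deriv θ) u = ∫ u : ℝ, (κ ^ 2 - V u) * φ u * θ u) := by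
  obtain ⟨Cg₀, hCg₀⟩ := hgbd
  obtain ⟨CV₀, hCV₀⟩ := hVbd
  set Cg : ℝ := max Cg₀ 0 with hCgdef
  set CV : ℝ := max CV₀ 0 with hCVdef
  have hCg : ∀ u, |g u| ≤ Cg := fun u => (hCg₀ u).trans (le_max_left _ _)
  have hCV : ∀ u, V u ≤ CV := fun u => (hCV₀ u).trans (le_max_left _ _)
  have hCgpos : 0 ≤ Cg := le_max_right _ _
  have hCVpos : 0 ≤ CV := le_max_right _ _
  set s : Set ℝ := Set.Icc (-a) a with hsdef
  have hsmeas : MeasurableSet s := measurableSet_Icc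
  have hsfin : volume s ≠ ⊤ := measure_Icc_lt_top.ne
  -- the function h = √V · g
  set h : ℝ → ℝ := fun u => Real.sqrt (V u) * g u with hhdef
  have hhmeas : Measurable h := (Real.continuous_sqrt.measurable.comp hVmeas).mul hgmeas
  have hhbd : ∀ u, |h u| ≤ Real.sqrt CV * Cg := by
    intro u
    rw [hhdef, abs_mul, abs_of_nonneg (Real.sqrt_nonneg _)]
    exact mul_le_mul (Real.sqrt_le_sqrt (hCV u)) (hCg u) (abs_nonneg _) (Real.sqrt_nonneg _)
  have hhsupp : ∀ u ∉ s, h u = 0 := fun u hu => by rw [hhdef]; simp [hgsupp u hu]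
  -- rewrite φ as a convolution with h
  have hφ' : ∀ u : ℝ, φ u = ∫ u' : ℝ, Real.exp (-κ * |u - u'|) / (2 * κ) * h u' := by
    intro u
    rw [hφ u]
    exact integral_congr_ae (Eventually.of_forall fun x => by rw [hhdef]; ring)
  -- part 1 : boundedness
  have hφbd : ∀ u, |φ u| ≤ 1 / (2 * κ) * (Real.sqrt CV * Cg) * (volume s).toReal := by
    intro u
    rw [hφ' u]
    exact bdd_conv κ hκ hsmeas hsfin hhmeas.aestronglyMeasurable hhbd hhsupp u
  -- part 2 : continuity
  have hφcont : Continuous φ := by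
    have : φ = fun u => ∫ u' : ℝ, Real.exp (-κ * |u - u'|) / (2 * κ) * h u' := funext hφ'
    rw [this]
    exact cont_conv κ hκ hsmeas hsfin hhmeas hhbd hhsupp
  -- part 3 : a.e. identity
  have hae : ∀ᵐ u : ℝ, Real.sqrt (V u) * φ u = g u := by
    filter_upwards [hBS] with u hu
    rw [hφ u, ← integral_const_mul, hu]
    exact integral_congr_ae (Eventually.of_forall fun x => by ring)
  refine ⟨⟨_, hφbd⟩, hφcont, hae, ?_⟩
  -- part 4 : the weak eigenvalue equation
  intro θ hθ hθc
  have hθcont : Continuous θ := hθ.continuous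
  have hθ' : ContDiff ℝ (⊤ : ℕ∞) θ := hθ.of_le (by simp)
  have hθ1 : ContDiff ℝ (⊤ : ℕ∞) (deriv θ) := (contDiff_infty_iff_deriv.mp hθ').2
  have hθ2c : Continuous (deriv (deriv θ)) := ((contDiff_infty_iff_deriv.mp hθ1).2).continuous
  have hθ2supp : HasCompactSupport (deriv (deriv θ)) := hθc.deriv.deriv
  -- the Fubini/swap identity for any continuous compactly supported ψ
  have swap : ∀ ψ : ℝ → ℝ, Continuous ψ → HasCompactSupport ψ →
      (∫ u : ℝ, φ u * ψ u)
        = ∫ u' : ℝ, h u' * ∫ u : ℝ, Real.exp (-κ * |u - u'|) / (2 * κ) * ψ u := by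
    intro ψ hψcont hψsupp
    obtain ⟨Cψ, hCψ⟩ := hψsupp.exists_bound_of_continuous hψcont
    have hCψ' : ∀ x, |ψ x| ≤ Cψ := fun x => by simpa [Real.norm_eq_abs] using hCψ x
    have hCψpos : 0 ≤ Cψ := le_trans (abs_nonneg _) (hCψ' 0)
    set K : Set ℝ := tsupport ψ with hKdef
    have hKmeas : MeasurableSet K := (isClosed_tsupport ψ).measurableSet
    have hKfin : volume K ≠ ⊤ := hψsupp.measure_lt_top.ne
    have h1 : (fun u : ℝ => φ u * ψ u)
        = fun u : ℝ => ∫ u' : ℝ, Real.exp (-κ * |u - u'|) / (2 * κ) * h u' * ψ u := by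
      funext u
      rw [hφ' u, ← integral_mul_const]
    rw [h1]
    have hFint : Integrable (Function.uncurry fun u u' : ℝ =>
        Real.exp (-κ * |u - u'|) / (2 * κ) * h u' * ψ u)
        ((volume : Measure ℝ).prod volume) := by
      have hker : Continuous fun p : ℝ × ℝ => Real.exp (-κ * |p.1 - p.2|) / (2 * κ) :=
        (Real.continuous_exp.comp
          (continuous_const.mul (continuous_fst.sub continuous_snd).abs)).div_const _
      have hFmeas : AEStronglyMeasurable (Function.uncurry fun u u' : ℝ =>
          Real.exp (-κ * |u - u'|) / (2 * κ) * h u' * ψ u)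
          ((volume : Measure ℝ).prod volume) := by
        apply Measurable.aestronglyMeasurable
        exact ((hker.measurable.mul (hhmeas.comp measurable_snd)).mul
          ((hψcont.measurable).comp measurable_fst))
      apply Integrable.mono'
        (g := (K ×ˢ s).indicator fun _ => 1 / (2 * κ) * (Real.sqrt CV * Cg) * Cψ)
        ?_ hFmeas
      · apply ae_of_all
        intro p
        by_cases hp : p ∈ K ×ˢ s
        · rw [Set.indicator_of_mem hp]
          show |Real.exp (-κ * |p.1 - p.2|) / (2 * κ) * h p.2 * ψ p.1| ≤ _
          rw [abs_mul, abs_mul]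
          have k1 := kernel_bd κ hκ (p.1 - p.2)
          have k2 := hhbd p.2
          have k3 := hCψ' p.1
          have : |Real.exp (-κ * |p.1 - p.2|) / (2 * κ)| * |h p.2|
              ≤ 1 / (2 * κ) * (Real.sqrt CV * Cg) :=
            mul_le_mul k1 k2 (abs_nonneg _) (by positivity)
          exact mul_le_mul this k3 (abs_nonneg _) (by positivity)
        · rw [Set.indicator_of_notMem hp]
          rw [Set.mem_prod, not_and_or] at hp
          show ‖Real.exp (-κ * |p.1 - p.2|) / (2 * κ) * h p.2 * ψ p.1‖ ≤ 0
          have hz : Real.exp (-κ * |p.1 - p.2|) / (2 * κ) * h p.2 * ψ p.1 = 0 := by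
            rcases hp with hp | hp
            · rw [image_eq_zero_of_notMem_tsupport hp, mul_zero]
            · rw [hhsupp p.2 hp, mul_zero, zero_mul]
          rw [hz, norm_zero]
      · rw [integrable_indicator_iff (hKmeas.prod hsmeas)]
        refine integrableOn_const ?_
        rw [Measure.prod_prod]
        exact (ENNReal.mul_lt_top hKfin.lt_top hsfin.lt_top).ne
    rw [integral_integral_swap hFint]
    refine integral_congr_ae (Eventually.of_forall fun u' => ?_)
    simp only
    rw [show (fun u : ℝ => Real.exp (-κ * |u - u'|) / (2 * κ) * h u' * ψ u)
        = fun u : ℝ => h u' * (Real.exp (-κ * |u - u'|) / (2 * κ) * ψ u) from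
      funext fun u => by ring]
    exact integral_const_mul _ _
  -- green's identity divided by 2κ
  have hdiv : ∀ (f : ℝ → ℝ) (v : ℝ), (∫ u : ℝ, Real.exp (-κ * |u - v|) / (2 * κ) * f u)
      = (2 * κ)⁻¹ * ∫ u : ℝ, Real.exp (-κ * |u - v|) * f u := by
    intro f v
    rw [← integral_const_mul]
    exact integral_congr_ae (Eventually.of_forall fun x => by ring)
  have hI2 : ∀ v : ℝ, (∫ u : ℝ, Real.exp (-κ * |u - v|) / (2 * κ) * deriv (deriv θ) u)
      = κ ^ 2 * (∫ u : ℝ, Real.exp (-κ * |u - v|) / (2 * κ) * θ u) - θ v := by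
    intro v
    rw [hdiv (deriv (deriv θ)) v, hdiv θ v, green_int κ hκ θ hθ hθc v]
    field_simp
  -- the function I0
  set I0 : ℝ → ℝ := fun v => ∫ u : ℝ, Real.exp (-κ * |u - v|) / (2 * κ) * θ u with hI0def
  have hKθmeas : MeasurableSet (tsupport θ) := (isClosed_tsupport θ).measurableSet
  have hKθfin : volume (tsupport θ) ≠ ⊤ := hθc.measure_lt_top.ne
  obtain ⟨Cθ, hCθ⟩ := hθc.exists_bound_of_continuous hθcont
  have hCθ' : ∀ x, |θ x| ≤ Cθ := fun x => by simpa [Real.norm_eq_abs] using hCθ x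
  have hθsupp0 : ∀ x ∉ tsupport θ, θ x = 0 := fun x hx => image_eq_zero_of_notMem_tsupport hx
  -- I0 with symmetric kernel |v - u| vs |u - v| : note |u - v| = |v - u|
  have hI0cont : Continuous I0 := by
    have : I0 = fun v => ∫ u : ℝ, Real.exp (-κ * |v - u|) / (2 * κ) * θ u := by
      funext v
      exact integral_congr_ae (Eventually.of_forall fun u => by
        show Real.exp (-κ * |u - v|) / (2 * κ) * θ u = Real.exp (-κ * |v - u|) / (2 * κ) * θ u
        rw [abs_sub_comm])
    rw [this]
    exact cont_conv κ hκ hKθmeas hKθfin hθcont.measurable hCθ' hθsupp0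
  have hI0bd : ∀ v, |I0 v| ≤ 1 / (2 * κ) * Cθ * (volume (tsupport θ)).toReal := by
    intro v
    have : I0 v = ∫ u : ℝ, Real.exp (-κ * |v - u|) / (2 * κ) * θ u :=
      integral_congr_ae (Eventually.of_forall fun u => by
        show Real.exp (-κ * |u - v|) / (2 * κ) * θ u = Real.exp (-κ * |v - u|) / (2 * κ) * θ u
        rw [abs_sub_comm])
    rw [this]
    exact bdd_conv κ hκ hKθmeas hKθfin hθcont.measurable.aestronglyMeasurable hCθ' hθsupp0 v
  -- integrability facts
  have hInt1 : Integrable (fun u' : ℝ => h u' * I0 u') := by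
    apply integrable_of_bdd_supp hsmeas hsfin
      (hhmeas.mul hI0cont.measurable).aestronglyMeasurable
      (C := Real.sqrt CV * Cg * (1 / (2 * κ) * Cθ * (volume (tsupport θ)).toReal))
    · intro u
      simp only [Pi.mul_apply]
      rw [abs_mul]
      apply mul_le_mul (hhbd u) (hI0bd u) (abs_nonneg _)
      positivity
    · intro u hu
      simp only [Pi.mul_apply]
      rw [hhsupp u hu, zero_mul]
  have hInt2 : Integrable (fun u' : ℝ => h u' * θ u') := by
    apply integrable_of_bdd_supp hsmeas hsfin
      (hhmeas.mul hθcont.measurable).aestronglyMeasurable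
      (C := Real.sqrt CV * Cg * Cθ)
    · intro u
      simp only [Pi.mul_apply]
      rw [abs_mul]
      apply mul_le_mul (hhbd u) (hCθ' u) (abs_nonneg _)
      positivity
    · intro u hu
      simp only [Pi.mul_apply]
      rw [hhsupp u hu, zero_mul]
  -- LHS computation
  have hLHS : ∫ u : ℝ, φ u * deriv (deriv θ) u
      = κ ^ 2 * (∫ u' : ℝ, h u' * I0 u') - ∫ u' : ℝ, h u' * θ u' := by
    rw [swap (deriv (deriv θ)) hθ2c hθ2supp]
    have : (fun u' : ℝ => h u' *
        ∫ u : ℝ, Real.exp (-κ * |u - u'|) / (2 * κ) * deriv (deriv θ) u)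
        = fun u' : ℝ => κ ^ 2 * (h u' * I0 u') - h u' * θ u' := by
      funext u'
      rw [hI2 u']
      simp only [hI0def]
      ring
    rw [this, integral_sub (hInt1.const_mul _) hInt2, integral_const_mul]
  -- ∫ φθ = ∫ h · I0
  have hφθ : ∫ u : ℝ, φ u * θ u = ∫ u' : ℝ, h u' * I0 u' := swap θ hθcont hθc
  -- ∫ hθ = ∫ Vφθ
  have hVφθ : ∫ u' : ℝ, h u' * θ u' = ∫ u : ℝ, V u * φ u * θ u := by
    apply integral_congr_ae
    filter_upwards [hae] with u hu
    show Real.sqrt (V u) * g u * θ u = V u * φ u * θ u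
    rw [← hu, ← mul_assoc, Real.mul_self_sqrt (hVpos u)]
  -- integrability on RHS
  have hIntφθ : Integrable (fun u : ℝ => φ u * θ u) :=
    (hφcont.mul hθcont).integrable_of_hasCompactSupport hθc.mul_left
  have hIntVφθ : Integrable (fun u : ℝ => V u * φ u * θ u) := by
    apply integrable_of_bdd_supp hsmeas hsfin
      ((hVmeas.mul hφcont.measurable).mul hθcont.measurable).aestronglyMeasurable
      (C := CV * (1 / (2 * κ) * (Real.sqrt CV * Cg) * (volume s).toReal) * Cθ)
    · intro u
      simp only [Pi.mul_apply]
      rw [abs_mul, abs_mul]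
      have hVa : |V u| ≤ CV := by rw [abs_of_nonneg (hVpos u)]; exact hCV u
      have h2 : |V u| * |φ u| ≤ CV * (1 / (2 * κ) * (Real.sqrt CV * Cg) * (volume s).toReal) := by
        apply mul_le_mul hVa (hφbd u) (abs_nonneg _)
        exact hCVpos
      apply mul_le_mul h2 (hCθ' u) (abs_nonneg _)
      positivity
    · intro u hu
      simp only [Pi.mul_apply]
      rw [hVsupp u hu, zero_mul, zero_mul]
  -- RHS computation
  have hRHS : ∫ u : ℝ, (κ ^ 2 - V u) * φ u * θ u
      = κ ^ 2 * (∫ u : ℝ, φ u * θ u) - ∫ u : ℝ, V u * φ u * θ u := by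
    have : (fun u : ℝ => (κ ^ 2 - V u) * φ u * θ u)
        = fun u : ℝ => κ ^ 2 * (φ u * θ u) - V u * φ u * θ u := by
      funext u; ring
    rw [this, integral_sub (hIntφθ.const_mul _) hIntVφθ, integral_const_mul]
  rw [hLHS, hRHS, hφθ, hVφθ]
end

section
/- Quadratic mollifier estimate for the fibered Birman–Schwinger kernel: let κ > 0 and B > 0, and for b ∈ [0,B] set f_b(p) = e^{−b·√(κ²+p²)} / (2√(κ²+p²)). For every h ∈ C_c^∞(ℝ) there is a constant C > 0 such that for all η ∈ (0,1] and all b ∈ [0,B], |∫_ℝ |ĥ(ζ)|²·(f_b(ηζ) − f_b(0)) dζ| ≤ C·η², where ĥ(ζ) = ∫_ℝ h(s)·e^{−iζs} ds is the Fourier transform of h. -/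
set_option maxHeartbeats 1000000

open MeasureTheory

open Real FourierTransform
open scoped ContDiff

/-- The fiber of the straight Birman–Schwinger kernel:
`f_b(p) = e^{−b√(κ²+p²)}/(2√(κ²+p²))`. -/
noncomputable def fiberKer (κ b p : ℝ) : ℝ :=
  Real.exp (-b * Real.sqrt (κ ^ 2 + p ^ 2)) / (2 * Real.sqrt (κ ^ 2 + p ^ 2))

/-- The Fourier transform `ĥ(ζ) = ∫ h(s) e^{−iζs} ds`. -/
noncomputable def fourierT (h : ℝ → ℝ) (ζ : ℝ) : ℂ :=
  ∫ s : ℝ, (h s : ℂ) * Complex.exp (-Complex.I * ζ * s)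

lemma fiber_lip (κ b : ℝ) (hκ : 0 < κ) (hb : 0 ≤ b) (p : ℝ) :
    |fiberKer κ b p - fiberKer κ b 0| ≤ 1 / (4 * κ ^ 3) * p ^ 2 := by
  set g : ℝ → ℝ := fun t => Real.exp (-b * Real.sqrt (κ ^ 2 + t)) / (2 * Real.sqrt (κ ^ 2 + t))
    with hgdef
  set g' : ℝ → ℝ := fun t =>
    -(Real.exp (-b * Real.sqrt (κ ^ 2 + t)) * (b * Real.sqrt (κ ^ 2 + t) + 1)) /
      (4 * Real.sqrt (κ ^ 2 + t) ^ 3) with hg'def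
  have key : ∀ t ∈ Set.Ici (0:ℝ), HasDerivAt g (g' t) t := by
    intro t ht
    have hpos : 0 < κ ^ 2 + t := by have := pow_pos hκ 2; linarith [Set.mem_Ici.mp ht]
    have hspos : 0 < Real.sqrt (κ ^ 2 + t) := Real.sqrt_pos.2 hpos
    have h1 : HasDerivAt (fun t : ℝ => κ ^ 2 + t) 1 t := (hasDerivAt_id t).const_add _
    have hsqrt := h1.sqrt hpos.ne'
    have h3 := (hsqrt.const_mul (-b)).exp
    have h4 := hsqrt.const_mul 2
    have h5 := h3.div h4 (by positivity)
    refine HasDerivAt.congr_deriv (f := g) h5 ?_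
    have hne := hspos.ne'
    simp only [hg'def]
    field_simp
    ring_nf
  have hbound : ∀ t ∈ Set.Ici (0:ℝ), ‖g' t‖ ≤ 1 / (4 * κ ^ 3) := by
    intro t ht
    set s := Real.sqrt (κ ^ 2 + t) with hs
    have hκs : κ ≤ s := by
      have h := Real.sqrt_le_sqrt (show κ ^ 2 ≤ κ ^ 2 + t by linarith [Set.mem_Ici.mp ht])
      rwa [Real.sqrt_sq hκ.le] at h
    have hspos : 0 < s := lt_of_lt_of_le hκ hκs
    have hE : Real.exp (-b * s) * (b * s + 1) ≤ 1 := by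
      have h1 : b * s + 1 ≤ Real.exp (b * s) := Real.add_one_le_exp _
      calc Real.exp (-b * s) * (b * s + 1) ≤ Real.exp (-b * s) * Real.exp (b * s) :=
            mul_le_mul_of_nonneg_left h1 (Real.exp_nonneg _)
        _ = 1 := by rw [← Real.exp_add]; norm_num
    have hnn : 0 ≤ Real.exp (-b * s) * (b * s + 1) := by positivity
    rw [Real.norm_eq_abs, hg'def]
    simp only
    rw [abs_div, abs_neg, abs_of_nonneg hnn, abs_of_nonneg (by positivity)]
    have h43 : 4 * κ ^ 3 ≤ 4 * s ^ 3 := by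
      have := pow_le_pow_left₀ hκ.le hκs 3; linarith
    exact div_le_div₀ zero_le_one hE (by positivity) h43
  have hmv := (convex_Ici (0:ℝ)).norm_image_sub_le_of_norm_hasDerivWithin_le
    (fun x hx => (key x hx).hasDerivWithinAt) hbound
    (Set.mem_Ici.mpr le_rfl) (Set.mem_Ici.mpr (sq_nonneg p))
  have e1 : g (p ^ 2) = fiberKer κ b p := rfl
  have e2 : g 0 = fiberKer κ b 0 := by simp [hgdef, fiberKer]
  rw [e1, e2, Real.norm_eq_abs, sub_zero, Real.norm_eq_abs, abs_of_nonneg (sq_nonneg p)] at hmv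
  exact hmv

lemma fourierT_eq (h : ℝ → ℝ) (ζ : ℝ) :
    fourierT h ζ = 𝓕 (fun s => (h s : ℂ)) (ζ / (2 * π)) := by
  rw [Real.fourier_real_eq_integral_exp_smul]
  unfold fourierT
  congr 1
  funext s
  rw [smul_eq_mul, mul_comm]
  congr 1
  have hπ : (π : ℝ) ≠ 0 := Real.pi_ne_zero
  have : (-2 * π * s * (ζ / (2 * π)) : ℝ) = -(s * ζ) := by field_simp
  rw [this]
  push_cast
  ring

lemma fourier_deriv_eq (f : ℝ → ℂ) (hf : ContDiff ℝ ∞ f) (hs : HasCompactSupport f) (x : ℝ) :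
    𝓕 (deriv f) x = (2 * π * Complex.I * x) • (𝓕 f x) := by
  rw [Real.fourier_deriv (hf.continuous.integrable_of_hasCompactSupport hs)
    (hf.differentiable (by simp))
    (((contDiff_infty_iff_deriv.mp hf).2.continuous).integrable_of_hasCompactSupport hs.deriv)]

lemma fourier_pow_bound :
    ∀ (k : ℕ) (f : ℝ → ℂ), ContDiff ℝ ∞ f → HasCompactSupport f → ∀ ζ : ℝ,
      |ζ| ^ k * ‖𝓕 f (ζ / (2 * π))‖ ≤ ∫ s : ℝ, ‖deriv^[k] f s‖ := by
  intro k
  induction k with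
  | zero =>
    intro f hf hs ζ
    simpa using (show ‖𝓕 f (ζ / (2 * π))‖ ≤ ∫ s : ℝ, ‖f s‖ from
      VectorFourier.norm_fourierIntegral_le_integral_norm 𝐞 volume (innerₗ ℝ) f
      (ζ / (2 * π)))
  | succ k ih =>
    intro f hf hs ζ
    have hder := fourier_deriv_eq f hf hs (ζ / (2 * π))
    have h1 : ‖𝓕 (deriv f) (ζ / (2 * π))‖ = |ζ| * ‖𝓕 f (ζ / (2 * π))‖ := by
      rw [hder, norm_smul]
      congr 1
      have hπ : (π : ℝ) ≠ 0 := Real.pi_ne_zero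
      have : (2 * ↑π * Complex.I * ((ζ / (2 * π) : ℝ) : ℂ)) = Complex.I * (ζ : ℂ) := by
        have hπc : (π : ℂ) ≠ 0 := by exact_mod_cast hπ
        push_cast
        field_simp
      rw [this]
      simp [Complex.norm_def]
    have ih' := ih (deriv f) (contDiff_infty_iff_deriv.mp hf).2 hs.deriv ζ
    calc |ζ| ^ (k + 1) * ‖𝓕 f (ζ / (2 * π))‖
        = |ζ| ^ k * (|ζ| * ‖𝓕 f (ζ / (2 * π))‖) := by ring
      _ = |ζ| ^ k * ‖𝓕 (deriv f) (ζ / (2 * π))‖ := by rw [h1]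
      _ ≤ ∫ s : ℝ, ‖deriv^[k] (deriv f) s‖ := ih'
      _ = ∫ s : ℝ, ‖deriv^[k + 1] f s‖ := by simp only [Function.iterate_succ_apply]

/-- Integrability of `ζ ↦ ζ² ‖ĥ ζ‖²` for smooth compactly supported `h`, plus bounds. -/
lemma fourierT_weight_integrable (h : ℝ → ℝ) (hh : ContDiff ℝ (⊤ : ℕ∞) h)
    (hsupp : HasCompactSupport h) :
    Integrable (fun ζ : ℝ => ζ ^ 2 * ‖fourierT h ζ‖ ^ 2) := by
  set hc : ℝ → ℂ := fun s => (h s : ℂ) with hhc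
  have hc_smooth : ContDiff ℝ ∞ hc :=
    Complex.ofRealCLM.contDiff.comp (hh.of_le (by simp))
  have hc_supp : HasCompactSupport hc := hsupp.comp_left Complex.ofReal_zero
  set I0 := ∫ s : ℝ, ‖hc s‖ with hI0
  set I2 := ∫ s : ℝ, ‖deriv^[2] hc s‖ with hI2
  set I4 := ∫ s : ℝ, ‖deriv^[4] hc s‖ with hI4
  have hI0nn : 0 ≤ I0 := integral_nonneg fun s => norm_nonneg _
  have hI2nn : 0 ≤ I2 := integral_nonneg fun s => norm_nonneg _
  have hI4nn : 0 ≤ I4 := integral_nonneg fun s => norm_nonneg _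
  have b0 : ∀ ζ : ℝ, ‖fourierT h ζ‖ ≤ I0 := by
    intro ζ
    have := fourier_pow_bound 0 hc hc_smooth hc_supp ζ
    simpa [fourierT_eq] using this
  have b2 : ∀ ζ : ℝ, ζ ^ 2 * ‖fourierT h ζ‖ ≤ I2 := by
    intro ζ
    have := fourier_pow_bound 2 hc hc_smooth hc_supp ζ
    rw [sq_abs] at this
    rw [fourierT_eq, ← hhc]
    exact this
  have b4 : ∀ ζ : ℝ, ζ ^ 4 * ‖fourierT h ζ‖ ≤ I4 := by
    intro ζ
    have := fourier_pow_bound 4 hc hc_smooth hc_supp ζ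
    have habs : |ζ| ^ 4 = ζ ^ 4 := by
      rw [pow_abs, abs_of_nonneg (by positivity)]
    rw [habs] at this
    rw [fourierT_eq, ← hhc]
    exact this
  have hcont : Continuous (fourierT h) := by
    have : Continuous (𝓕 hc) :=
      VectorFourier.fourierIntegral_continuous Real.continuous_fourierChar
        (by exact continuous_inner) (hc_smooth.continuous.integrable_of_hasCompactSupport hc_supp)
    have h2 : Continuous fun ζ : ℝ => 𝓕 hc (ζ / (2 * π)) :=
      this.comp (continuous_id.div_const _)
    have h3 : (fun ζ : ℝ => 𝓕 hc (ζ / (2 * π))) = fourierT h := by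
      funext ζ; rw [fourierT_eq, hhc]
    rwa [h3] at h2
  have hmeas : AEStronglyMeasurable (fun ζ : ℝ => ζ ^ 2 * ‖fourierT h ζ‖ ^ 2) := by
    exact ((continuous_id.pow 2).mul ((hcont.norm.pow 2))).aestronglyMeasurable
  have hb : ∀ ζ : ℝ, ζ ^ 2 * ‖fourierT h ζ‖ ^ 2 ≤ I0 * (I2 + I4) * (1 + ζ ^ 2)⁻¹ := by
    intro ζ
    have hn : 0 ≤ ‖fourierT h ζ‖ := norm_nonneg _
    have hb0 := b0 ζ; have hb2 := b2 ζ; have hb4 := b4 ζ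
    have hden : (0:ℝ) < 1 + ζ ^ 2 := by positivity
    have k2 : ζ ^ 2 * ‖fourierT h ζ‖ * ‖fourierT h ζ‖ ≤ I2 * I0 := mul_le_mul hb2 hb0 hn hI2nn
    have k4 : ζ ^ 4 * ‖fourierT h ζ‖ * ‖fourierT h ζ‖ ≤ I4 * I0 := mul_le_mul hb4 hb0 hn hI4nn
    have key : ζ ^ 2 * ‖fourierT h ζ‖ ^ 2 * (1 + ζ ^ 2) ≤ I0 * (I2 + I4) := by
      calc ζ ^ 2 * ‖fourierT h ζ‖ ^ 2 * (1 + ζ ^ 2)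
          = ζ ^ 2 * ‖fourierT h ζ‖ * ‖fourierT h ζ‖
            + ζ ^ 4 * ‖fourierT h ζ‖ * ‖fourierT h ζ‖ := by ring
        _ ≤ I2 * I0 + I4 * I0 := add_le_add k2 k4
        _ = I0 * (I2 + I4) := by ring
    calc ζ ^ 2 * ‖fourierT h ζ‖ ^ 2
        = ζ ^ 2 * ‖fourierT h ζ‖ ^ 2 * (1 + ζ ^ 2) * (1 + ζ ^ 2)⁻¹ := by
          rw [mul_inv_cancel_right₀ hden.ne']
      _ ≤ I0 * (I2 + I4) * (1 + ζ ^ 2)⁻¹ :=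
          mul_le_mul_of_nonneg_right key (inv_nonneg.mpr hden.le)
  have hmaj : Integrable (fun ζ : ℝ => I0 * (I2 + I4) * (1 + ζ ^ 2)⁻¹) :=
    integrable_inv_one_add_sq.const_mul _
  refine hmaj.mono' hmeas (Filter.Eventually.of_forall fun ζ => ?_)
  rw [Real.norm_eq_abs, abs_of_nonneg (by positivity)]
  exact hb ζ

/-- quadratic mollifier estimate for the fibered Birman–Schwinger kernel:
for `κ > 0`, `B > 0` and `h ∈ C_c^∞(ℝ)` there is `C > 0` with
`|∫ |ĥ(ζ)|²(f_b(ηζ) − f_b(0)) dζ| ≤ Cη²` for all `η ∈ (0,1]` and `b ∈ [0,B]`. -/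
theorem fiber_mollifier_estimate (κ B : ℝ) (hκ : 0 < κ) (hB : 0 < B)
    (h : ℝ → ℝ) (hh : ContDiff ℝ (⊤ : ℕ∞) h) (hsupp : HasCompactSupport h) :
    ∃ C : ℝ, 0 < C ∧ ∀ η ∈ Set.Ioc (0:ℝ) 1, ∀ b ∈ Set.Icc (0:ℝ) B,
      |∫ ζ : ℝ, ‖fourierT h ζ‖ ^ 2 * (fiberKer κ b (η * ζ) - fiberKer κ b 0)|
        ≤ C * η ^ 2 := by
  have hint := fourierT_weight_integrable h hh hsupp
  set J := ∫ ζ : ℝ, ζ ^ 2 * ‖fourierT h ζ‖ ^ 2 with hJ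
  have hJnn : 0 ≤ J := integral_nonneg fun ζ => by positivity
  refine ⟨1 / (4 * κ ^ 3) * J + 1, by positivity, ?_⟩
  intro η hη b hb
  have hpt : ∀ ζ : ℝ, ‖‖fourierT h ζ‖ ^ 2 * (fiberKer κ b (η * ζ) - fiberKer κ b 0)‖
      ≤ (1 / (4 * κ ^ 3) * η ^ 2) * (ζ ^ 2 * ‖fourierT h ζ‖ ^ 2) := by
    intro ζ
    rw [Real.norm_eq_abs, abs_mul,
      abs_of_nonneg (by positivity : (0:ℝ) ≤ ‖fourierT h ζ‖ ^ 2)]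
    have hlip := fiber_lip κ b hκ hb.1 (η * ζ)
    calc ‖fourierT h ζ‖ ^ 2 * |fiberKer κ b (η * ζ) - fiberKer κ b 0|
        ≤ ‖fourierT h ζ‖ ^ 2 * (1 / (4 * κ ^ 3) * (η * ζ) ^ 2) :=
          mul_le_mul_of_nonneg_left hlip (by positivity)
      _ = (1 / (4 * κ ^ 3) * η ^ 2) * (ζ ^ 2 * ‖fourierT h ζ‖ ^ 2) := by ring
  have hmaj : Integrable
      (fun ζ : ℝ => (1 / (4 * κ ^ 3) * η ^ 2) * (ζ ^ 2 * ‖fourierT h ζ‖ ^ 2)) :=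
    hint.const_mul _
  have hle := norm_integral_le_of_norm_le hmaj (Filter.Eventually.of_forall hpt)
  calc |∫ ζ : ℝ, ‖fourierT h ζ‖ ^ 2 * (fiberKer κ b (η * ζ) - fiberKer κ b 0)|
      = ‖∫ ζ : ℝ, ‖fourierT h ζ‖ ^ 2 * (fiberKer κ b (η * ζ) - fiberKer κ b 0)‖ :=
        (Real.norm_eq_abs _).symm
    _ ≤ ∫ ζ : ℝ, (1 / (4 * κ ^ 3) * η ^ 2) * (ζ ^ 2 * ‖fourierT h ζ‖ ^ 2) := hle
    _ = (1 / (4 * κ ^ 3) * η ^ 2) * J := by rw [MeasureTheory.integral_const_mul]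
    _ = (1 / (4 * κ ^ 3) * J) * η ^ 2 := by ring
    _ ≤ (1 / (4 * κ ^ 3) * J + 1) * η ^ 2 := by
        have : (0:ℝ) ≤ η ^ 2 := sq_nonneg η
        nlinarith
end

section
/- Weyl-sequence estimate for the straight soft waveguide: let a > 0, let V : ℝ → ℝ be continuous with V = 0 outside [−a,a], let ε₀ ∈ ℝ, and let φ₀ ∈ C²(ℝ) be such that φ₀ and φ₀' are bounded and square integrable and −φ₀''(u) − V(u)φ₀(u) = ε₀φ₀(u) for all u ∈ ℝ. Let v, w ∈ C_c^∞(ℝ) and k ∈ ℝ, and for μ, ν > 0 define ψ_{μ,ν}(s,u) = √(μν)·v(μs)·w(νu)·φ₀(u)·e^{iks}. Then there exists C > 0 such that for all μ, ν ∈ (0,1], ‖Δψ_{μ,ν} + V(u)·ψ_{μ,ν} + (ε₀ + k²)·ψ_{μ,ν}‖_{L²(ℝ²)} ≤ C·(μ + ν), where Δ = ∂²/∂s² + ∂²/∂u² is the classical Laplacian. -/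
open MeasureTheory
open scoped ContDiff ENNReal

/-- The classical Laplacian `Δψ = ∂²ψ/∂s² + ∂²ψ/∂u²` of a complex function on `ℝ²`. -/
noncomputable def lapC (ψ : ℝ × ℝ → ℂ) (y : ℝ × ℝ) : ℂ :=
  deriv (deriv (fun r => ψ (r, y.2))) y.1 + deriv (deriv (fun r => ψ (y.1, r))) y.2

/-- The Weyl trial function `ψ_{μ,ν}(s,u) = √(μν) v(μs) w(νu) φ₀(u) e^{iks}`. -/
noncomputable def weylFun (v w φ₀ : ℝ → ℝ) (k μ ν : ℝ) (p : ℝ × ℝ) : ℂ :=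
  ((Real.sqrt (μ * ν) * v (μ * p.1) * w (ν * p.2) * φ₀ p.2 : ℝ) : ℂ)
    * Complex.exp (Complex.I * k * p.1)

/-- The remainder after cancellation. -/
noncomputable def remFun (v w φ₀ : ℝ → ℝ) (k μ ν : ℝ) (p : ℝ × ℝ) : ℂ :=
  (Real.sqrt (μ*ν) : ℂ) * Complex.exp (Complex.I * k * p.1) *
    ( (μ:ℂ)^2 * deriv (deriv v) (μ*p.1) * w (ν*p.2) * φ₀ p.2
    + 2*Complex.I*k*μ * deriv v (μ*p.1) * w (ν*p.2) * φ₀ p.2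
    + (ν:ℂ)^2 * v (μ*p.1) * deriv (deriv w) (ν*p.2) * φ₀ p.2
    + 2*(ν:ℂ) * v (μ*p.1) * deriv w (ν*p.2) * deriv φ₀ p.2 )

lemma hasDerivAt_cexp_mul (k s : ℝ) :
    HasDerivAt (fun t : ℝ => Complex.exp (Complex.I * k * t))
      (Complex.I * k * Complex.exp (Complex.I * k * s)) s := by
  have h1 : HasDerivAt (fun t : ℝ => Complex.I * (k : ℂ) * (t : ℂ)) (Complex.I * k) s := by
    simpa using (Complex.ofRealCLM.hasDerivAt (x := s)).const_mul (Complex.I * (k:ℂ))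
  simpa [mul_comm] using h1.cexp

lemma hasDerivAt_mul_cexp {g : ℝ → ℂ} {g' : ℂ} (k : ℝ) {s : ℝ} (hg : HasDerivAt g g' s) :
    HasDerivAt (fun t => g t * Complex.exp (Complex.I * k * t))
      ((g' + Complex.I * k * g s) * Complex.exp (Complex.I * k * s)) s := by
  have := hg.mul (hasDerivAt_cexp_mul k s)
  exact this.congr_deriv (by ring)

lemma hasDerivAt_scaled {f : ℝ → ℝ} (hf : Differentiable ℝ f) (μ t : ℝ) :
    HasDerivAt (fun t => f (μ * t)) (μ * deriv f (μ * t)) t := by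
  exact (((hf (μ * t)).hasDerivAt).comp t ((hasDerivAt_id t).const_mul μ)).congr_deriv (by ring)

lemma weyl_deriv_fst (v w φ₀ : ℝ → ℝ) (hv1 : Differentiable ℝ v) (hv2 : Differentiable ℝ (deriv v))
    (k μ ν : ℝ) (s u : ℝ) :
    deriv (deriv (fun r => weylFun v w φ₀ k μ ν (r, u))) s =
      ((Real.sqrt (μ*ν) : ℂ) * μ^2 * deriv (deriv v) (μ*s) * w (ν*u) * φ₀ u
        + 2*Complex.I*k*μ * (Real.sqrt (μ*ν) : ℂ) * deriv v (μ*s) * w (ν*u) * φ₀ u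
        + Complex.I^2*(k:ℂ)^2 * (Real.sqrt (μ*ν) : ℂ) * v (μ*s) * w (ν*u) * φ₀ u)
        * Complex.exp (Complex.I * k * s) := by
  have hfun : (fun r => weylFun v w φ₀ k μ ν (r, u))
      = fun r => ((Real.sqrt (μ*ν) * v (μ*r) * w (ν*u) * φ₀ u : ℝ) : ℂ)
          * Complex.exp (Complex.I * k * r) := rfl
  have hg : ∀ t, HasDerivAt (fun t => Real.sqrt (μ*ν) * v (μ*t) * w (ν*u) * φ₀ u)
      (Real.sqrt (μ*ν) * (μ * deriv v (μ*t)) * w (ν*u) * φ₀ u) t := fun t =>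
    (((hasDerivAt_scaled hv1 μ t).const_mul (Real.sqrt (μ*ν))).mul_const (w (ν*u))).mul_const (φ₀ u)
  have hg' : ∀ t, HasDerivAt (fun t => Real.sqrt (μ*ν) * (μ * deriv v (μ*t)) * w (ν*u) * φ₀ u)
      (Real.sqrt (μ*ν) * (μ * (μ * deriv (deriv v) (μ*t))) * w (ν*u) * φ₀ u) t := fun t =>
    ((((hasDerivAt_scaled hv2 μ t).const_mul μ).const_mul (Real.sqrt (μ*ν))).mul_const
      (w (ν*u))).mul_const (φ₀ u)
  have h1 : ∀ t, HasDerivAt (fun r => weylFun v w φ₀ k μ ν (r, u))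
      ((((Real.sqrt (μ*ν) * (μ * deriv v (μ*t)) * w (ν*u) * φ₀ u : ℝ) : ℂ)
        + Complex.I * k * ((Real.sqrt (μ*ν) * v (μ*t) * w (ν*u) * φ₀ u : ℝ) : ℂ))
        * Complex.exp (Complex.I * k * t)) t := by
    intro t
    rw [hfun]
    exact hasDerivAt_mul_cexp k ((hg t).ofReal_comp)
  have e1 : deriv (fun r => weylFun v w φ₀ k μ ν (r, u))
      = fun t => (((Real.sqrt (μ*ν) * (μ * deriv v (μ*t)) * w (ν*u) * φ₀ u : ℝ) : ℂ)
        + Complex.I * k * ((Real.sqrt (μ*ν) * v (μ*t) * w (ν*u) * φ₀ u : ℝ) : ℂ))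
        * Complex.exp (Complex.I * k * t) := funext fun t => (h1 t).deriv
  rw [e1]
  have h2 : HasDerivAt (fun t => (((Real.sqrt (μ*ν) * (μ * deriv v (μ*t)) * w (ν*u) * φ₀ u : ℝ) : ℂ)
        + Complex.I * k * ((Real.sqrt (μ*ν) * v (μ*t) * w (ν*u) * φ₀ u : ℝ) : ℂ))
        * Complex.exp (Complex.I * k * t))
      (((((Real.sqrt (μ*ν) * (μ * (μ * deriv (deriv v) (μ*s))) * w (ν*u) * φ₀ u : ℝ) : ℂ)
          + Complex.I * k * ((Real.sqrt (μ*ν) * (μ * deriv v (μ*s)) * w (ν*u) * φ₀ u : ℝ) : ℂ))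
        + Complex.I * k * ((((Real.sqrt (μ*ν) * (μ * deriv v (μ*s)) * w (ν*u) * φ₀ u : ℝ) : ℂ))
          + Complex.I * k * ((Real.sqrt (μ*ν) * v (μ*s) * w (ν*u) * φ₀ u : ℝ) : ℂ)))
        * Complex.exp (Complex.I * k * s)) s := by
    exact hasDerivAt_mul_cexp k
      (((hg' s).ofReal_comp).add (((hg s).ofReal_comp).const_mul (Complex.I * k)))
  rw [h2.deriv]
  push_cast
  ring

lemma weyl_deriv_snd (v w φ₀ : ℝ → ℝ) (hw1 : Differentiable ℝ w) (hw2 : Differentiable ℝ (deriv w))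
    (hφ1 : Differentiable ℝ φ₀) (hφ2 : Differentiable ℝ (deriv φ₀))
    (k μ ν : ℝ) (s u : ℝ) :
    deriv (deriv (fun r => weylFun v w φ₀ k μ ν (s, r))) u =
      ((Real.sqrt (μ*ν) : ℂ) * v (μ*s) * (ν^2 : ℝ) * deriv (deriv w) (ν*u) * φ₀ u
        + 2 * (Real.sqrt (μ*ν) : ℂ) * v (μ*s) * ν * deriv w (ν*u) * deriv φ₀ u
        + (Real.sqrt (μ*ν) : ℂ) * v (μ*s) * w (ν*u) * deriv (deriv φ₀) u)
        * Complex.exp (Complex.I * k * s) := by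
  have hfun : (fun r => weylFun v w φ₀ k μ ν (s, r))
      = fun r => ((Real.sqrt (μ*ν) * v (μ*s) * w (ν*r) * φ₀ r : ℝ) : ℂ)
          * Complex.exp (Complex.I * k * s) := rfl
  have hh : ∀ r, HasDerivAt (fun r => Real.sqrt (μ*ν) * v (μ*s) * w (ν*r) * φ₀ r)
      (Real.sqrt (μ*ν) * v (μ*s) * (ν * deriv w (ν*r)) * φ₀ r
        + Real.sqrt (μ*ν) * v (μ*s) * w (ν*r) * deriv φ₀ r) r := fun r =>
    ((hasDerivAt_scaled hw1 ν r).const_mul (Real.sqrt (μ*ν) * v (μ*s))).mul (hφ1 r).hasDerivAt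
  have hh' : ∀ r, HasDerivAt (fun r => Real.sqrt (μ*ν) * v (μ*s) * (ν * deriv w (ν*r)) * φ₀ r
        + Real.sqrt (μ*ν) * v (μ*s) * w (ν*r) * deriv φ₀ r)
      ((Real.sqrt (μ*ν) * v (μ*s) * (ν * (ν * deriv (deriv w) (ν*r))) * φ₀ r
          + Real.sqrt (μ*ν) * v (μ*s) * (ν * deriv w (ν*r)) * deriv φ₀ r)
        + (Real.sqrt (μ*ν) * v (μ*s) * (ν * deriv w (ν*r)) * deriv φ₀ r
          + Real.sqrt (μ*ν) * v (μ*s) * w (ν*r) * deriv (deriv φ₀) r)) r := fun r =>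
    ((((hasDerivAt_scaled hw2 ν r).const_mul ν).const_mul
        (Real.sqrt (μ*ν) * v (μ*s))).mul (hφ1 r).hasDerivAt).add
      (((hasDerivAt_scaled hw1 ν r).const_mul (Real.sqrt (μ*ν) * v (μ*s))).mul
        (hφ2 r).hasDerivAt)
  have e1 : deriv (fun r => weylFun v w φ₀ k μ ν (s, r))
      = fun r => ((Real.sqrt (μ*ν) * v (μ*s) * (ν * deriv w (ν*r)) * φ₀ r
        + Real.sqrt (μ*ν) * v (μ*s) * w (ν*r) * deriv φ₀ r : ℝ) : ℂ)
        * Complex.exp (Complex.I * k * s) := by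
    rw [hfun]
    exact funext fun r => (((hh r).ofReal_comp).mul_const _).deriv
  rw [e1, (((hh' u).ofReal_comp).mul_const (Complex.exp (Complex.I * k * s))).deriv]
  push_cast
  ring

lemma weyl_pointwise (V : ℝ → ℝ) (ε₀ : ℝ) (v w φ₀ : ℝ → ℝ)
    (hv1 : Differentiable ℝ v) (hv2 : Differentiable ℝ (deriv v))
    (hw1 : Differentiable ℝ w) (hw2 : Differentiable ℝ (deriv w))
    (hφ1 : Differentiable ℝ φ₀) (hφ2 : Differentiable ℝ (deriv φ₀))
    (heigen : ∀ u : ℝ, -deriv (deriv φ₀) u - V u * φ₀ u = ε₀ * φ₀ u)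
    (k μ ν : ℝ) (p : ℝ × ℝ) :
    lapC (weylFun v w φ₀ k μ ν) p + (V p.2 : ℂ) * weylFun v w φ₀ k μ ν p
      + ((ε₀ + k ^ 2 : ℝ) : ℂ) * weylFun v w φ₀ k μ ν p = remFun v w φ₀ k μ ν p := by
  have heq : deriv (deriv φ₀) p.2 = -(V p.2 * φ₀ p.2) - ε₀ * φ₀ p.2 := by
    have := heigen p.2; linarith
  rw [lapC, weyl_deriv_fst v w φ₀ hv1 hv2 k μ ν p.1 p.2,
    weyl_deriv_snd v w φ₀ hw1 hw2 hφ1 hφ2 k μ ν p.1 p.2, heq, remFun, weylFun, Complex.I_sq]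
  push_cast
  ring

set_option maxHeartbeats 1000000 in
/-- Weyl-sequence estimate for the straight soft waveguide:
`‖Δψ_{μ,ν} + Vψ_{μ,ν} + (ε₀ + k²)ψ_{μ,ν}‖_{L²(ℝ²)} ≤ C(μ + ν)` for `μ, ν ∈ (0,1]`. -/
theorem weyl_sequence_estimate (a : ℝ) (ha : 0 < a)
    (V : ℝ → ℝ) (hVcont : Continuous V) (hVsupp : ∀ u : ℝ, u ∉ Set.Icc (-a) a → V u = 0)
    (ε₀ : ℝ) (φ₀ : ℝ → ℝ) (hφ₀ : ContDiff ℝ 2 φ₀)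
    (hφ₀bd : ∃ C : ℝ, ∀ u, |φ₀ u| ≤ C ∧ |deriv φ₀ u| ≤ C)
    (hφ₀L2 : MemLp φ₀ 2 (volume : Measure ℝ))
    (hφ₀'L2 : MemLp (deriv φ₀) 2 (volume : Measure ℝ))
    (heigen : ∀ u : ℝ, -deriv (deriv φ₀) u - V u * φ₀ u = ε₀ * φ₀ u)
    (v w : ℝ → ℝ) (hv : ContDiff ℝ (⊤ : ℕ∞) v) (hvsupp : HasCompactSupport v)
    (hw : ContDiff ℝ (⊤ : ℕ∞) w) (hwsupp : HasCompactSupport w) (k : ℝ) :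
    ∃ C : ℝ, 0 < C ∧ ∀ μ ∈ Set.Ioc (0:ℝ) 1, ∀ ν ∈ Set.Ioc (0:ℝ) 1,
      eLpNorm (fun p : ℝ × ℝ =>
          lapC (weylFun v w φ₀ k μ ν) p + (V p.2 : ℂ) * weylFun v w φ₀ k μ ν p
            + ((ε₀ + k ^ 2 : ℝ) : ℂ) * weylFun v w φ₀ k μ ν p) 2 volume
        ≤ ENNReal.ofReal (C * (μ + ν)) := by
  -- smoothness facts
  have hvI : ContDiff ℝ ∞ v := hv.of_le le_rfl
  have hwI : ContDiff ℝ ∞ w := hw.of_le le_rfl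
  have hv1 : Differentiable ℝ v := hvI.differentiable (by norm_num)
  have hvdI : ContDiff ℝ ∞ (deriv v) := (contDiff_infty_iff_deriv.mp hvI).2
  have hv2 : Differentiable ℝ (deriv v) := hvdI.differentiable (by norm_num)
  have hvddC : Continuous (deriv (deriv v)) := ((contDiff_infty_iff_deriv.mp hvdI).2).continuous
  have hw1 : Differentiable ℝ w := hwI.differentiable (by norm_num)
  have hwdI : ContDiff ℝ ∞ (deriv w) := (contDiff_infty_iff_deriv.mp hwI).2
  have hw2 : Differentiable ℝ (deriv w) := hwdI.differentiable (by norm_num)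
  have hwddC : Continuous (deriv (deriv w)) := ((contDiff_infty_iff_deriv.mp hwdI).2).continuous
  have hφ1 : Differentiable ℝ φ₀ := hφ₀.differentiable (by norm_num)
  have hφ11 : ContDiff ℝ (1+1) φ₀ := by norm_num; exact hφ₀
  have hφ2 : Differentiable ℝ (deriv φ₀) :=
    ((contDiff_succ_iff_deriv.mp hφ11).2.2).differentiable one_ne_zero
  -- sup bounds
  obtain ⟨Bv0, hBv0⟩ := hvsupp.exists_bound_of_continuous hvI.continuous
  obtain ⟨Bv1, hBv1⟩ := (hvsupp.deriv).exists_bound_of_continuous hvdI.continuous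
  obtain ⟨Bv2, hBv2⟩ := (hvsupp.deriv.deriv).exists_bound_of_continuous hvddC
  obtain ⟨Bw0, hBw0⟩ := hwsupp.exists_bound_of_continuous hwI.continuous
  obtain ⟨Bw1, hBw1⟩ := (hwsupp.deriv).exists_bound_of_continuous hwdI.continuous
  obtain ⟨Bw2, hBw2⟩ := (hwsupp.deriv.deriv).exists_bound_of_continuous hwddC
  obtain ⟨B0, hB0⟩ := hφ₀bd
  set Cv : ℝ := max 1 (max Bv0 (max Bv1 Bv2)) with hCvdef
  set Cw : ℝ := max 1 (max Bw0 (max Bw1 Bw2)) with hCwdef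
  set Cφ : ℝ := max 1 B0 with hCφdef
  have hCv0 : (0:ℝ) ≤ Cv := le_trans zero_le_one (le_max_left _ _)
  have hCw0 : (0:ℝ) ≤ Cw := le_trans zero_le_one (le_max_left _ _)
  have hCφ0 : (0:ℝ) ≤ Cφ := le_trans zero_le_one (le_max_left _ _)
  have hCv1 : (0:ℝ) < Cv := lt_of_lt_of_le one_pos (le_max_left _ _)
  have hCw1 : (0:ℝ) < Cw := lt_of_lt_of_le one_pos (le_max_left _ _)
  have hCφ1 : (0:ℝ) < Cφ := lt_of_lt_of_le one_pos (le_max_left _ _)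
  have hBv0' : Bv0 ≤ Cv := le_trans (le_max_left _ _) (le_max_right _ _)
  have hBv1' : Bv1 ≤ Cv := le_trans (le_trans (le_max_left _ _) (le_max_right _ _)) (le_max_right _ _)
  have hBv2' : Bv2 ≤ Cv := le_trans (le_trans (le_max_right _ _) (le_max_right _ _)) (le_max_right _ _)
  have hBw0' : Bw0 ≤ Cw := le_trans (le_max_left _ _) (le_max_right _ _)
  have hBw1' : Bw1 ≤ Cw := le_trans (le_trans (le_max_left _ _) (le_max_right _ _)) (le_max_right _ _)
  have hBw2' : Bw2 ≤ Cw := le_trans (le_trans (le_max_right _ _) (le_max_right _ _)) (le_max_right _ _)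
  have hB0' : B0 ≤ Cφ := le_max_right _ _
  -- supports inside intervals
  obtain ⟨Tv, hTv0, hTv⟩ : ∃ T : ℝ, 0 < T ∧ tsupport v ⊆ Set.Icc (-T) T := by
    obtain ⟨r, hr⟩ := hvsupp.isBounded.subset_closedBall 0
    refine ⟨max r 1, by positivity, hr.trans ?_⟩
    rw [Real.closedBall_eq_Icc]
    apply Set.Icc_subset_Icc <;> simp [le_max_left]
  obtain ⟨Tw, hTw0, hTw⟩ : ∃ T : ℝ, 0 < T ∧ tsupport w ⊆ Set.Icc (-T) T := by
    obtain ⟨r, hr⟩ := hwsupp.isBounded.subset_closedBall 0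
    refine ⟨max r 1, by positivity, hr.trans ?_⟩
    rw [Real.closedBall_eq_Icc]
    apply Set.Icc_subset_Icc <;> simp [le_max_left]
  have htsv1 : tsupport (deriv v) ⊆ tsupport v :=
    closure_minimal support_deriv_subset (isClosed_tsupport v)
  have htsv2 : tsupport (deriv (deriv v)) ⊆ tsupport v :=
    le_trans (closure_minimal support_deriv_subset (isClosed_tsupport _)) htsv1
  have htsw1 : tsupport (deriv w) ⊆ tsupport w :=
    closure_minimal support_deriv_subset (isClosed_tsupport w)
  have htsw2 : tsupport (deriv (deriv w)) ⊆ tsupport w :=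
    le_trans (closure_minimal support_deriv_subset (isClosed_tsupport _)) htsw1
  set K : ℝ := Cv * Cw * Cφ * (3 + 2 * |k|) with hKdef
  have hQ : (0:ℝ) ≤ Cv * Cw * Cφ := mul_nonneg (mul_nonneg hCv0 hCw0) hCφ0
  have hK0 : (0:ℝ) < K := by
    apply mul_pos (mul_pos (mul_pos hCv1 hCw1) hCφ1)
    positivity
  refine ⟨Real.sqrt (4 * Tv * Tw) * K + 1, by positivity, ?_⟩
  intro μ hμ ν hν
  obtain ⟨hμ0, hμ1⟩ := hμ
  obtain ⟨hν0, hν1⟩ := hν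
  have hcong : (fun p : ℝ × ℝ =>
      lapC (weylFun v w φ₀ k μ ν) p + (V p.2 : ℂ) * weylFun v w φ₀ k μ ν p
        + ((ε₀ + k ^ 2 : ℝ) : ℂ) * weylFun v w φ₀ k μ ν p) = remFun v w φ₀ k μ ν :=
    funext fun p => weyl_pointwise V ε₀ v w φ₀ hv1 hv2 hw1 hw2 hφ1 hφ2 heigen k μ ν p
  rw [hcong]
  set S : Set (ℝ × ℝ) := Set.Icc (-(Tv/μ)) (Tv/μ) ×ˢ Set.Icc (-(Tw/ν)) (Tw/ν) with hSdef
  have hS : MeasurableSet S := measurableSet_Icc.prod measurableSet_Icc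
  have hsupp : Function.support (remFun v w φ₀ k μ ν) ⊆ S := by
    intro p hp
    by_contra hpS
    apply hp
    have hpS' : p.1 ∉ Set.Icc (-(Tv/μ)) (Tv/μ) ∨ p.2 ∉ Set.Icc (-(Tw/ν)) (Tw/ν) := by
      by_contra hc
      push_neg at hc
      exact hpS (Set.mem_prod.mpr ⟨hc.1, hc.2⟩)
    rcases hpS' with h | h
    · have hx : μ * p.1 ∉ tsupport v := by
        intro hmem
        obtain ⟨hl, hr⟩ := Set.mem_Icc.mp (hTv hmem)
        refine h (Set.mem_Icc.mpr ⟨?_, ?_⟩)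
        · rw [neg_le, le_div_iff₀ hμ0]
          nlinarith
        · rw [le_div_iff₀ hμ0]
          nlinarith
      have h0 : v (μ * p.1) = 0 := image_eq_zero_of_notMem_tsupport hx
      have h1 : deriv v (μ * p.1) = 0 :=
        image_eq_zero_of_notMem_tsupport (fun hc => hx (htsv1 hc))
      have h2 : deriv (deriv v) (μ * p.1) = 0 :=
        image_eq_zero_of_notMem_tsupport (fun hc => hx (htsv2 hc))
      simp [remFun, h0, h1, h2]
    · have hx : ν * p.2 ∉ tsupport w := by
        intro hmem
        obtain ⟨hl, hr⟩ := Set.mem_Icc.mp (hTw hmem)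
        refine h (Set.mem_Icc.mpr ⟨?_, ?_⟩)
        · rw [neg_le, le_div_iff₀ hν0]
          nlinarith
        · rw [le_div_iff₀ hν0]
          nlinarith
      have h0 : w (ν * p.2) = 0 := image_eq_zero_of_notMem_tsupport hx
      have h1 : deriv w (ν * p.2) = 0 :=
        image_eq_zero_of_notMem_tsupport (fun hc => hx (htsw1 hc))
      have h2 : deriv (deriv w) (ν * p.2) = 0 :=
        image_eq_zero_of_notMem_tsupport (fun hc => hx (htsw2 hc))
      simp [remFun, h0, h1, h2]
  have hbd : ∀ p : ℝ × ℝ, ‖remFun v w φ₀ k μ ν p‖ ≤ Real.sqrt (μ * ν) * (K * (μ + ν)) := by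
    intro p
    have hexp : ‖Complex.exp (Complex.I * k * p.1)‖ = 1 := by
      rw [Complex.norm_exp]; simp
    have bv0 : |v (μ * p.1)| ≤ Cv :=
      le_trans (by simpa [Real.norm_eq_abs] using hBv0 (μ * p.1)) hBv0'
    have bv1 : |deriv v (μ * p.1)| ≤ Cv :=
      le_trans (by simpa [Real.norm_eq_abs] using hBv1 (μ * p.1)) hBv1'
    have bv2 : |deriv (deriv v) (μ * p.1)| ≤ Cv :=
      le_trans (by simpa [Real.norm_eq_abs] using hBv2 (μ * p.1)) hBv2'
    have bw0 : |w (ν * p.2)| ≤ Cw :=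
      le_trans (by simpa [Real.norm_eq_abs] using hBw0 (ν * p.2)) hBw0'
    have bw1 : |deriv w (ν * p.2)| ≤ Cw :=
      le_trans (by simpa [Real.norm_eq_abs] using hBw1 (ν * p.2)) hBw1'
    have bw2 : |deriv (deriv w) (ν * p.2)| ≤ Cw :=
      le_trans (by simpa [Real.norm_eq_abs] using hBw2 (ν * p.2)) hBw2'
    have bp0 : |φ₀ p.2| ≤ Cφ := le_trans (hB0 p.2).1 hB0'
    have bp1 : |deriv φ₀ p.2| ≤ Cφ := le_trans (hB0 p.2).2 hB0'
    have t1 : ‖(μ:ℂ)^2 * (deriv (deriv v) (μ*p.1) : ℝ) * (w (ν*p.2) : ℝ) * (φ₀ p.2 : ℝ)‖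
        ≤ μ^2 * Cv * Cw * Cφ := by
      simp only [norm_mul, norm_pow, Complex.norm_real, Real.norm_eq_abs]
      rw [abs_of_pos hμ0]
      gcongr
    have t2 : ‖2*Complex.I*(k:ℂ)*(μ:ℂ) * (deriv v (μ*p.1) : ℝ) * (w (ν*p.2) : ℝ) * (φ₀ p.2 : ℝ)‖
        ≤ 2 * |k| * μ * Cv * Cw * Cφ := by
      simp only [norm_mul, Complex.norm_real, Real.norm_eq_abs, Complex.norm_I,
        Complex.norm_ofNat, mul_one, one_mul]
      rw [abs_of_pos hμ0]
      gcongr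
    have t3 : ‖(ν:ℂ)^2 * (v (μ*p.1) : ℝ) * (deriv (deriv w) (ν*p.2) : ℝ) * (φ₀ p.2 : ℝ)‖
        ≤ ν^2 * Cv * Cw * Cφ := by
      simp only [norm_mul, norm_pow, Complex.norm_real, Real.norm_eq_abs]
      rw [abs_of_pos hν0]
      gcongr
    have t4 : ‖2*(ν:ℂ) * (v (μ*p.1) : ℝ) * (deriv w (ν*p.2) : ℝ) * (deriv φ₀ p.2 : ℝ)‖
        ≤ 2 * ν * Cv * Cw * Cφ := by
      simp only [norm_mul, Complex.norm_real, Real.norm_eq_abs, Complex.norm_ofNat]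
      rw [abs_of_pos hν0]
      gcongr
    simp only [remFun]
    rw [norm_mul, norm_mul, hexp, mul_one, Complex.norm_real, Real.norm_eq_abs,
      abs_of_nonneg (Real.sqrt_nonneg _)]
    refine mul_le_mul_of_nonneg_left ?_ (Real.sqrt_nonneg _)
    calc ‖(μ:ℂ)^2 * (deriv (deriv v) (μ*p.1) : ℝ) * (w (ν*p.2) : ℝ) * (φ₀ p.2 : ℝ)
          + 2*Complex.I*(k:ℂ)*(μ:ℂ) * (deriv v (μ*p.1) : ℝ) * (w (ν*p.2) : ℝ) * (φ₀ p.2 : ℝ)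
          + (ν:ℂ)^2 * (v (μ*p.1) : ℝ) * (deriv (deriv w) (ν*p.2) : ℝ) * (φ₀ p.2 : ℝ)
          + 2*(ν:ℂ) * (v (μ*p.1) : ℝ) * (deriv w (ν*p.2) : ℝ) * (deriv φ₀ p.2 : ℝ)‖
        ≤ ‖(μ:ℂ)^2 * (deriv (deriv v) (μ*p.1) : ℝ) * (w (ν*p.2) : ℝ) * (φ₀ p.2 : ℝ)‖
          + ‖2*Complex.I*(k:ℂ)*(μ:ℂ) * (deriv v (μ*p.1) : ℝ) * (w (ν*p.2) : ℝ) * (φ₀ p.2 : ℝ)‖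
          + ‖(ν:ℂ)^2 * (v (μ*p.1) : ℝ) * (deriv (deriv w) (ν*p.2) : ℝ) * (φ₀ p.2 : ℝ)‖
          + ‖2*(ν:ℂ) * (v (μ*p.1) : ℝ) * (deriv w (ν*p.2) : ℝ) * (deriv φ₀ p.2 : ℝ)‖ :=
        le_trans (norm_add_le _ _) (add_le_add_left (le_trans (norm_add_le _ _)
          (add_le_add_left (norm_add_le _ _) _)) _)
      _ ≤ μ^2 * Cv * Cw * Cφ + 2 * |k| * μ * Cv * Cw * Cφ + ν^2 * Cv * Cw * Cφ
          + 2 * ν * Cv * Cw * Cφ := add_le_add (add_le_add (add_le_add t1 t2) t3) t4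
      _ ≤ K * (μ + ν) := by
        nlinarith [mul_nonneg hQ (mul_nonneg (abs_nonneg k) hν0.le),
          mul_nonneg hQ (mul_nonneg hμ0.le (sub_nonneg.mpr hμ1)),
          mul_nonneg hQ (mul_nonneg hν0.le (sub_nonneg.mpr hν1)),
          mul_nonneg hQ hμ0.le, mul_nonneg hQ hν0.le]
  calc eLpNorm (remFun v w φ₀ k μ ν) 2 volume
      = eLpNorm (remFun v w φ₀ k μ ν) 2 (volume.restrict S) := by
        conv_lhs => rw [← Set.indicator_eq_self.mpr hsupp]
        rw [eLpNorm_indicator_eq_eLpNorm_restrict hS]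
    _ ≤ (volume.restrict S) Set.univ ^ (2 : ℝ≥0∞).toReal⁻¹
          * ENNReal.ofReal (Real.sqrt (μ * ν) * (K * (μ + ν))) :=
        eLpNorm_le_of_ae_bound (ae_of_all _ hbd)
    _ ≤ ENNReal.ofReal ((Real.sqrt (4 * Tv * Tw) * K + 1) * (μ + ν)) := by
        rw [Measure.restrict_apply_univ]
        have hSvol : volume S = ENNReal.ofReal ((2*(Tv/μ)) * (2*(Tw/ν))) := by
          rw [hSdef, Measure.volume_eq_prod, Measure.prod_prod, Real.volume_Icc, Real.volume_Icc,
            sub_neg_eq_add, sub_neg_eq_add, ← ENNReal.ofReal_mul (by positivity)]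
          congr 1
          ring
        rw [hSvol, ENNReal.toReal_ofNat,
          ENNReal.ofReal_rpow_of_nonneg (by positivity) (by norm_num),
          ← ENNReal.ofReal_mul (by positivity)]
        apply ENNReal.ofReal_le_ofReal
        have e1 : ((2*(Tv/μ)) * (2*(Tw/ν))) ^ ((2:ℝ)⁻¹) = Real.sqrt ((4*Tv*Tw)/(μ*ν)) := by
          rw [Real.sqrt_eq_rpow, one_div]
          congr 1
          field_simp
          ring
        have e2 : Real.sqrt ((4*Tv*Tw)/(μ*ν)) * Real.sqrt (μ*ν) = Real.sqrt (4*Tv*Tw) := by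
          rw [← Real.sqrt_mul (by positivity)]
          congr 1
          field_simp
        calc ((2*(Tv/μ)) * (2*(Tw/ν))) ^ ((2:ℝ)⁻¹) * (Real.sqrt (μ*ν) * (K * (μ + ν)))
            = (Real.sqrt ((4*Tv*Tw)/(μ*ν)) * Real.sqrt (μ*ν)) * (K * (μ + ν)) := by
              rw [e1]; ring
          _ = Real.sqrt (4*Tv*Tw) * (K * (μ + ν)) := by rw [e2]
          _ ≤ (Real.sqrt (4*Tv*Tw) * K + 1) * (μ + ν) := by
              nlinarith [Real.sqrt_nonneg (4*Tv*Tw), hK0, hμ0, hν0]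
end
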